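/- arXiv:1411.7204 — 2 statements merged into one kernel-verified Lean document; each statement's English description precedes it below -/
import Mathlib

section
/- Let (H,α) be a monoidal Hom-Hopf algebra, (A,β) a right (H,α)-Hom-comodule algebra with a total integral φ:H→A, and (M,μ) a relative Hom-Hopf module. Define the trace map τ_M:(M,μ)→(M,μ) by τ_M(m) = m_(0)·φ(S(m_(1))). Then τ_M(m) ∈ M₀ = {m∈M : ρ_M(m)=μ⁻¹(m)⊗1_H} for every m∈M, and τ_M restricts to the identity on M₀. -/
/- Preliminaries: monoidal Hom-structures (Caenepeel–Goyvaerts style), following the paper. -/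

open TensorProduct

noncomputable section

universe u v

/-- A monoidal Hom-algebra `(A, β)`. -/
structure HomAlgebra (k : Type v) (A : Type u) [CommRing k] [AddCommGroup A] [Module k A] where
  aut : A ≃ₗ[k] A
  mul : A →ₗ[k] A →ₗ[k] A
  one : A
  aut_mul : ∀ a b : A, aut (mul a b) = mul (aut a) (aut b)
  aut_one : aut one = one
  hom_assoc : ∀ a b c : A, mul (aut a) (mul b c) = mul (mul a b) (aut c)
  one_mul : ∀ a : A, mul one a = aut a
  mul_one : ∀ a : A, mul a one = aut a

/-- The bilinear map on tensor products induced by two bilinear maps: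
`(m ⊗ n, p ⊗ q) ↦ f m p ⊗ g n q`. -/
def biTensor {k : Type v} [CommRing k] {M N P Q R S : Type*}
    [AddCommGroup M] [Module k M] [AddCommGroup N] [Module k N]
    [AddCommGroup P] [Module k P] [AddCommGroup Q] [Module k Q]
    [AddCommGroup R] [Module k R] [AddCommGroup S] [Module k S]
    (f : M →ₗ[k] P →ₗ[k] R) (g : N →ₗ[k] Q →ₗ[k] S) :
    M ⊗[k] N →ₗ[k] P ⊗[k] Q →ₗ[k] R ⊗[k] S :=
  (TensorProduct.homTensorHomMap (RingHom.id k) P Q R S).comp (TensorProduct.map f g)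

/-- A monoidal Hom-Hopf algebra `(H, α, S)`. -/
structure HomHopfAlgebra (k : Type v) (H : Type u) [CommRing k] [AddCommGroup H] [Module k H]
    extends HomAlgebra k H where
  comul : H →ₗ[k] H ⊗[k] H
  counit : H →ₗ[k] k
  comul_aut : ∀ h, comul (aut h) = TensorProduct.map aut.toLinearMap aut.toLinearMap (comul h)
  counit_aut : ∀ h, counit (aut h) = counit h
  hom_coassoc : ∀ h, TensorProduct.map aut.symm.toLinearMap comul (comul h)
      = TensorProduct.assoc k H H H (TensorProduct.map comul aut.toLinearMap (comul h))
  counit_comul_left : ∀ h,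
      TensorProduct.lid k H (TensorProduct.map counit LinearMap.id (comul h)) = aut.symm h
  counit_comul_right : ∀ h,
      TensorProduct.rid k H (TensorProduct.map LinearMap.id counit (comul h)) = aut.symm h
  comul_mul : ∀ a b, comul (mul a b) = biTensor mul mul (comul a) (comul b)
  comul_one : comul one = one ⊗ₜ[k] one
  counit_mul : ∀ a b, counit (mul a b) = counit a * counit b
  counit_one : counit one = 1
  antipode : H →ₗ[k] H
  antipode_convolution : ∀ h,
      TensorProduct.lift mul (TensorProduct.map antipode LinearMap.id (comul h)) = counit h • one
  convolution_antipode : ∀ h,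
      TensorProduct.lift mul (TensorProduct.map LinearMap.id antipode (comul h)) = counit h • one
  antipode_aut : ∀ h, antipode (aut h) = aut (antipode h)

variable {k : Type v} [CommRing k]
variable {H : Type u} [AddCommGroup H] [Module k H]
variable {A : Type u} [AddCommGroup A] [Module k A]

/-- A right `(A, β)`-Hom-module `(M, μ)`. -/
structure HomModule (k : Type v) {A : Type u} [CommRing k] [AddCommGroup A] [Module k A]
    (Aa : HomAlgebra k A) (M : Type u) [AddCommGroup M] [Module k M] where
  aut : M ≃ₗ[k] M
  act : M →ₗ[k] A →ₗ[k] M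
  act_act : ∀ (m : M) (a b : A), act (act m a) (Aa.aut b) = act (aut m) (Aa.mul a b)
  act_one : ∀ m : M, act m Aa.one = aut m
  aut_act : ∀ (m : M) (a : A), aut (act m a) = act (aut m) (Aa.aut a)

/-- A right `(H, α)`-Hom-comodule `(M, μ)`. -/
structure HomComodule (k : Type v) {H : Type u} [CommRing k] [AddCommGroup H] [Module k H]
    (Hh : HomHopfAlgebra k H) (M : Type u) [AddCommGroup M] [Module k M] where
  aut : M ≃ₗ[k] M
  coact : M →ₗ[k] M ⊗[k] H
  coact_aut : ∀ m, coact (aut m) = TensorProduct.map aut.toLinearMap Hh.aut.toLinearMap (coact m)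
  counit_coact : ∀ m,
      TensorProduct.rid k M (TensorProduct.map LinearMap.id Hh.counit (coact m)) = aut.symm m
  hom_coassoc : ∀ m,
      TensorProduct.assoc k M H H (TensorProduct.map coact Hh.aut.symm.toLinearMap (coact m))
        = TensorProduct.map aut.symm.toLinearMap Hh.comul (coact m)

/-- A right `(H, α)`-Hom-comodule algebra `(A, β)`. -/
structure HomComoduleAlgebra (k : Type v) {H : Type u} [CommRing k] [AddCommGroup H] [Module k H]
    (Hh : HomHopfAlgebra k H) (A : Type u) [AddCommGroup A] [Module k A]
    extends HomAlgebra k A where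
  coact : A →ₗ[k] A ⊗[k] H
  coact_aut : ∀ a, coact (aut a) = TensorProduct.map aut.toLinearMap Hh.aut.toLinearMap (coact a)
  counit_coact : ∀ a,
      TensorProduct.rid k A (TensorProduct.map LinearMap.id Hh.counit (coact a)) = aut.symm a
  hom_coassoc : ∀ a,
      TensorProduct.assoc k A H H (TensorProduct.map coact Hh.aut.symm.toLinearMap (coact a))
        = TensorProduct.map aut.symm.toLinearMap Hh.comul (coact a)
  coact_mul : ∀ a b, coact (mul a b) = biTensor mul Hh.mul (coact a) (coact b)
  coact_one : coact one = one ⊗ₜ[k] Hh.one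

/-- A relative Hom-Hopf module `(M, μ)`. -/
structure RelHopfModule (k : Type v) {H A : Type u} [CommRing k]
    [AddCommGroup H] [Module k H] [AddCommGroup A] [Module k A]
    (Hh : HomHopfAlgebra k H) (AA : HomComoduleAlgebra k Hh A)
    (M : Type u) [AddCommGroup M] [Module k M] where
  aut : M ≃ₗ[k] M
  act : M →ₗ[k] A →ₗ[k] M
  act_act : ∀ (m : M) (a b : A), act (act m a) (AA.aut b) = act (aut m) (AA.mul a b)
  act_one : ∀ m : M, act m AA.one = aut m
  aut_act : ∀ (m : M) (a : A), aut (act m a) = act (aut m) (AA.aut a)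
  coact : M →ₗ[k] M ⊗[k] H
  coact_aut : ∀ m, coact (aut m) = TensorProduct.map aut.toLinearMap Hh.aut.toLinearMap (coact m)
  counit_coact : ∀ m,
      TensorProduct.rid k M (TensorProduct.map LinearMap.id Hh.counit (coact m)) = aut.symm m
  hom_coassoc : ∀ m,
      TensorProduct.assoc k M H H (TensorProduct.map coact Hh.aut.symm.toLinearMap (coact m))
        = TensorProduct.map aut.symm.toLinearMap Hh.comul (coact m)
  compat : ∀ (m : M) (a : A), coact (act m a) = biTensor act Hh.mul (coact m) (AA.coact a)

/-- The underlying Hom-module of a relative Hom-Hopf module. -/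
def RelHopfModule.toHomModule {Hh : HomHopfAlgebra k H} {AA : HomComoduleAlgebra k Hh A}
    {M : Type u} [AddCommGroup M] [Module k M] (T : RelHopfModule k Hh AA M) :
    HomModule k AA.toHomAlgebra M :=
  ⟨T.aut, T.act, T.act_act, T.act_one, T.aut_act⟩

/-- The underlying Hom-comodule of a relative Hom-Hopf module. -/
def RelHopfModule.toHomComodule {Hh : HomHopfAlgebra k H} {AA : HomComoduleAlgebra k Hh A}
    {M : Type u} [AddCommGroup M] [Module k M] (T : RelHopfModule k Hh AA M) :
    HomComodule k Hh M :=
  ⟨T.aut, T.coact, T.coact_aut, T.counit_coact, T.hom_coassoc⟩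

/-- A total integral `φ : (H, α) → (A, β)`. -/
structure TotalIntegral (k : Type v) {H A : Type u} [CommRing k]
    [AddCommGroup H] [Module k H] [AddCommGroup A] [Module k A]
    (Hh : HomHopfAlgebra k H) (AA : HomComoduleAlgebra k Hh A) where
  toFun : H →ₗ[k] A
  colinear : ∀ h, AA.coact (toFun h) = TensorProduct.map toFun LinearMap.id (Hh.comul h)
  commutes : ∀ h, toFun (Hh.aut h) = AA.aut (toFun h)
  normal : toFun Hh.one = AA.one

/-- The `(A, β)`-action on `M ⊗ H` of the right adjoint `G`:
`(m ⊗ h) · a = m · a₍₀₎ ⊗ h a₍₁₎`. -/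
def Gact {M : Type u} [AddCommGroup M] [Module k M]
    (Hh : HomHopfAlgebra k H) (AA : HomComoduleAlgebra k Hh A)
    (act : M →ₗ[k] A →ₗ[k] M) : (M ⊗[k] H) →ₗ[k] A →ₗ[k] (M ⊗[k] H) :=
  (biTensor act Hh.mul).compl₂ AA.coact

/-- The `(H, α)`-coaction on `M ⊗ H` of the right adjoint `G`:
`ρ(m ⊗ h) = (μ⁻¹(m) ⊗ h₍₁₎) ⊗ α(h₍₂₎)`. -/
def Gcoact {M : Type u} [AddCommGroup M] [Module k M]
    (Hh : HomHopfAlgebra k H) (autM : M ≃ₗ[k] M) :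
    M ⊗[k] H →ₗ[k] (M ⊗[k] H) ⊗[k] H :=
  ((TensorProduct.assoc k M H H).symm.toLinearMap).comp
    (TensorProduct.map autM.symm.toLinearMap
      ((TensorProduct.map LinearMap.id Hh.aut.toLinearMap).comp Hh.comul))

/-- The counit of the adjunction: `δ(n ⊗ h) = ε(h) n`. -/
def Gcounit (Hh : HomHopfAlgebra k H) (N : Type u) [AddCommGroup N] [Module k N] :
    N ⊗[k] H →ₗ[k] N :=
  (TensorProduct.rid k N).toLinearMap.comp (TensorProduct.map LinearMap.id Hh.counit)

/-- The map `λ_M : M ⊗ H → M`, `λ_M(m ⊗ h) = μ⁻¹(m₍₀₎) · φ(S(m₍₁₎) α(h))`. -/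
def lamMap {M : Type u} [AddCommGroup M] [Module k M]
    {Hh : HomHopfAlgebra k H} {AA : HomComoduleAlgebra k Hh A}
    (φ : H →ₗ[k] A) (T : RelHopfModule k Hh AA M) : M ⊗[k] H →ₗ[k] M :=
  (TensorProduct.lift T.act).comp
    ((TensorProduct.map T.aut.symm.toLinearMap
        (φ.comp ((TensorProduct.lift Hh.mul).comp
          (TensorProduct.map Hh.antipode Hh.aut.toLinearMap)))).comp
      (((TensorProduct.assoc k M H H).toLinearMap).comp
        (TensorProduct.map T.coact LinearMap.id)))

/-- The trace map `m ↦ m₍₀₎ · φ(S(m₍₁₎))` (for any Hom-action `act` and Hom-coaction `coact`). -/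
def traceMap {M : Type u} [AddCommGroup M] [Module k M]
    (S : H →ₗ[k] H) (φ : H →ₗ[k] A)
    (act : M →ₗ[k] A →ₗ[k] M) (coact : M →ₗ[k] M ⊗[k] H) : M →ₗ[k] M :=
  (TensorProduct.lift act).comp
    ((TensorProduct.map LinearMap.id (φ.comp S)).comp coact)

/-- A normalized `(A, β)`-integral `θ : H ⊗ H → A`. -/
structure NormalizedIntegral (k : Type v) {H A : Type u} [CommRing k]
    [AddCommGroup H] [Module k H] [AddCommGroup A] [Module k A]
    (Hh : HomHopfAlgebra k H) (AA : HomComoduleAlgebra k Hh A) where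
  θ : H ⊗[k] H →ₗ[k] A
  commutes : ∀ x, θ (TensorProduct.map Hh.aut.toLinearMap Hh.aut.toLinearMap x) = AA.aut (θ x)
  /-- `θ(α⁻¹(g) ⊗ h₍₁₎) ⊗ α(h₍₂₎) = β(θ(g₍₂₎ ⊗ α⁻¹(h))₍₀₎) ⊗ g₍₁₎ θ(g₍₂₎ ⊗ α⁻¹(h))₍₁₎`. -/
  cond1 : ∀ g h : H,
    TensorProduct.map θ Hh.aut.toLinearMap
        ((TensorProduct.assoc k H H H).symm (Hh.aut.symm g ⊗ₜ[k] Hh.comul h))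
      = TensorProduct.lift
          ((TensorProduct.homTensorHomMap (RingHom.id k) A H A H).comp
            (((TensorProduct.mk k (A →ₗ[k] A) (H →ₗ[k] H)) AA.aut.toLinearMap).comp Hh.mul))
          (TensorProduct.map LinearMap.id
            (AA.coact.comp (θ.comp ((TensorProduct.mk k H H).flip (Hh.aut.symm h))))
            (Hh.comul g))
  /-- `θ(h₍₁₎ ⊗ h₍₂₎) = ε(h) 1_A`. -/
  cond2 : ∀ h : H, θ (Hh.comul h) = Hh.counit h • AA.one
  /-- `β²(a₍₀₎₍₀₎) θ(α⁻¹(g) a₍₀₎₍₁₎ ⊗ α⁻¹(h) α⁻¹(a₍₁₎)) = θ(g ⊗ h) a`. -/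
  cond3 : ∀ (g h : H) (a : A),
    TensorProduct.lift AA.mul
      (TensorProduct.map (AA.aut.toLinearMap.comp AA.aut.toLinearMap)
          (θ.comp (TensorProduct.map (Hh.mul (Hh.aut.symm g)) (Hh.mul (Hh.aut.symm h))))
        (TensorProduct.assoc k A H H
          (TensorProduct.map AA.coact Hh.aut.symm.toLinearMap (AA.coact a))))
      = AA.mul (θ (g ⊗ₜ[k] h)) a

/-- The map `ν_M : M ⊗ H → M`, `ν_M(m ⊗ h) = μ(m₍₀₎) · θ(m₍₁₎ ⊗ α⁻¹(h))`. -/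
def nuMap {M : Type u} [AddCommGroup M] [Module k M]
    {Hh : HomHopfAlgebra k H} {AA : HomComoduleAlgebra k Hh A}
    (θ : H ⊗[k] H →ₗ[k] A) (T : RelHopfModule k Hh AA M) : M ⊗[k] H →ₗ[k] M :=
  (TensorProduct.lift T.act).comp
    ((TensorProduct.map T.aut.toLinearMap
        (θ.comp (TensorProduct.map LinearMap.id Hh.aut.symm.toLinearMap))).comp
      (((TensorProduct.assoc k M H H).toLinearMap).comp
        (TensorProduct.map T.coact LinearMap.id)))

/-- The `(A, β)`-action on `M ⊗ A`: `(m ⊗ a) · b = μ⁻¹(m) ⊗ a β(b)`. -/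
def MAact {M : Type u} [AddCommGroup M] [Module k M]
    {Hh : HomHopfAlgebra k H} (AA : HomComoduleAlgebra k Hh A)
    (autM : M ≃ₗ[k] M) : (M ⊗[k] A) →ₗ[k] A →ₗ[k] (M ⊗[k] A) :=
  (((TensorProduct.homTensorHomMap (RingHom.id k) M A M A).comp
    (((((TensorProduct.mk k (M →ₗ[k] M) (A →ₗ[k] A)) autM.symm.toLinearMap).comp
      AA.mul.flip).comp AA.aut.toLinearMap)))).flip

/-- The `(H, α)`-coaction on `M ⊗ A`: `ρ(m ⊗ a) = (m₍₀₎ ⊗ a₍₀₎) ⊗ m₍₁₎ a₍₁₎`. -/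
def MAcoact {M : Type u} [AddCommGroup M] [Module k M]
    (Hh : HomHopfAlgebra k H) (AA : HomComoduleAlgebra k Hh A)
    (coactM : M →ₗ[k] M ⊗[k] H) : (M ⊗[k] A) →ₗ[k] (M ⊗[k] A) ⊗[k] H :=
  (TensorProduct.map LinearMap.id (TensorProduct.lift Hh.mul)).comp
    ((TensorProduct.tensorTensorTensorComm k M H A H).toLinearMap.comp
      (TensorProduct.map coactM AA.coact))

/-- The map `ξ : H ⊗ A → A ⊗ H`, `ξ(h ⊗ a) = β(a₍₀₎) ⊗ α⁻¹(h) a₍₁₎`. -/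
def xiMap (Hh : HomHopfAlgebra k H) (AA : HomComoduleAlgebra k Hh A) :
    H ⊗[k] A →ₗ[k] A ⊗[k] H :=
  (TensorProduct.lift ((TensorProduct.homTensorHomMap (RingHom.id k) A H A H).comp
      (((((TensorProduct.mk k (A →ₗ[k] A) (H →ₗ[k] H)) AA.aut.toLinearMap).comp
        Hh.mul).comp Hh.aut.symm.toLinearMap)))).comp
    (TensorProduct.map LinearMap.id AA.coact)

/-- Morphisms of right `(A, β)`-Hom-modules. -/
def IsHomModuleHom {M N : Type u} [AddCommGroup M] [Module k M] [AddCommGroup N] [Module k N]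
    {Aa : HomAlgebra k A} (Mm : HomModule k Aa M) (Nn : HomModule k Aa N)
    (f : M →ₗ[k] N) : Prop :=
  (∀ m, f (Mm.aut m) = Nn.aut (f m)) ∧ ∀ m a, f (Mm.act m a) = Nn.act (f m) a

/-- Morphisms of right `(H, α)`-Hom-comodules. -/
def IsHomComoduleHom {M N : Type u} [AddCommGroup M] [Module k M] [AddCommGroup N] [Module k N]
    {Hh : HomHopfAlgebra k H} (Mm : HomComodule k Hh M) (Nn : HomComodule k Hh N)
    (f : M →ₗ[k] N) : Prop :=
  (∀ m, f (Mm.aut m) = Nn.aut (f m)) ∧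
    Nn.coact.comp f = (TensorProduct.map f LinearMap.id).comp Mm.coact

/-- Morphisms of relative Hom-Hopf modules. -/
def IsRelHopfHom {M N : Type u} [AddCommGroup M] [Module k M] [AddCommGroup N] [Module k N]
    {Hh : HomHopfAlgebra k H} {AA : HomComoduleAlgebra k Hh A}
    (Mm : RelHopfModule k Hh AA M) (Nn : RelHopfModule k Hh AA N)
    (f : M →ₗ[k] N) : Prop :=
  (∀ m, f (Mm.aut m) = Nn.aut (f m)) ∧
    (∀ m a, f (Mm.act m a) = Nn.act (f m) a) ∧
    Nn.coact.comp f = (TensorProduct.map f LinearMap.id).comp Mm.coact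

end

noncomputable section AuxProofs

open TensorProduct

section GenericNat

variable {k : Type v} [CommRing k]
variable {X X' X'' Y Y' Y'' Z Z' : Type*}
  [AddCommGroup X] [Module k X] [AddCommGroup X'] [Module k X'] [AddCommGroup X''] [Module k X'']
  [AddCommGroup Y] [Module k Y] [AddCommGroup Y'] [Module k Y'] [AddCommGroup Y''] [Module k Y'']
  [AddCommGroup Z] [Module k Z] [AddCommGroup Z'] [Module k Z']

lemma map_map (f' : X' →ₗ[k] X'') (g' : Y' →ₗ[k] Y'') (f : X →ₗ[k] X') (g : Y →ₗ[k] Y')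
    (t : X ⊗[k] Y) :
    TensorProduct.map f' g' (TensorProduct.map f g t)
      = TensorProduct.map (f' ∘ₗ f) (g' ∘ₗ g) t := by
  rw [← LinearMap.comp_apply, ← TensorProduct.map_comp]

lemma natAssoc (f : X →ₗ[k] X') (g : Y →ₗ[k] Y') (h : Z →ₗ[k] Z') (t : (X ⊗[k] Y) ⊗[k] Z) :
    TensorProduct.map f (TensorProduct.map g h) (TensorProduct.assoc k X Y Z t)
      = TensorProduct.assoc k X' Y' Z' (TensorProduct.map (TensorProduct.map f g) h t) := by
  induction t using TensorProduct.induction_on with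
  | zero => simp
  | add a b ha hb => simp only [map_add, ha, hb]
  | tmul s z =>
    induction s using TensorProduct.induction_on with
    | zero => simp
    | add a b ha hb => simp only [add_tmul, map_add, ha, hb]
    | tmul x y => simp

lemma natAssocL (f : X →ₗ[k] X') (t : (X ⊗[k] Y) ⊗[k] Z) :
    TensorProduct.map f LinearMap.id (TensorProduct.assoc k X Y Z t)
      = TensorProduct.assoc k X' Y Z
          (TensorProduct.map (TensorProduct.map f LinearMap.id) LinearMap.id t) := by
  induction t using TensorProduct.induction_on with
  | zero => simp
  | add a b ha hb => simp only [map_add, ha, hb]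
  | tmul s z =>
    induction s using TensorProduct.induction_on with
    | zero => simp
    | add a b ha hb => simp only [add_tmul, map_add, ha, hb]
    | tmul x y => simp

lemma natAssocSymm (f : X →ₗ[k] X') (g : Y →ₗ[k] Y') (h : Z →ₗ[k] Z')
    (t : X ⊗[k] (Y ⊗[k] Z)) :
    (TensorProduct.assoc k X' Y' Z').symm (TensorProduct.map f (TensorProduct.map g h) t)
      = TensorProduct.map (TensorProduct.map f g) h ((TensorProduct.assoc k X Y Z).symm t) := by
  induction t using TensorProduct.induction_on with
  | zero => simp
  | add a b ha hb => simp only [map_add, ha, hb]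
  | tmul x s =>
    induction s using TensorProduct.induction_on with
    | zero => simp
    | add a b ha hb => simp only [tmul_add, map_add, ha, hb]
    | tmul y z => simp

lemma natSymm2 (g : Z →ₗ[k] Z') (t : X ⊗[k] (Y ⊗[k] Z)) :
    TensorProduct.map LinearMap.id g ((TensorProduct.assoc k X Y Z).symm t)
      = (TensorProduct.assoc k X Y Z').symm
          (TensorProduct.map LinearMap.id (TensorProduct.map LinearMap.id g) t) := by
  induction t using TensorProduct.induction_on with
  | zero => simp
  | add a b ha hb => simp only [map_add, ha, hb]
  | tmul x s =>
    induction s using TensorProduct.induction_on with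
    | zero => simp
    | add a b ha hb => simp only [tmul_add, map_add, ha, hb]
    | tmul y z => simp

lemma lidNat (f : X →ₗ[k] Y) (t : k ⊗[k] X) :
    (TensorProduct.lid k Y) (TensorProduct.map LinearMap.id f t)
      = f ((TensorProduct.lid k X) t) := by
  induction t using TensorProduct.induction_on with
  | zero => simp
  | add a b ha hb => simp only [map_add, ha, hb]
  | tmul c x => simp

lemma ridNat (f : X →ₗ[k] Y) (t : X ⊗[k] k) :
    (TensorProduct.rid k Y) (TensorProduct.map f LinearMap.id t)
      = f ((TensorProduct.rid k X) t) := by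
  induction t using TensorProduct.induction_on with
  | zero => simp
  | add a b ha hb => simp only [map_add, ha, hb]
  | tmul x c => simp

end GenericNat

@[simp] lemma biTensor_tmul {k : Type v} [CommRing k] {M N P Q R S : Type*}
    [AddCommGroup M] [Module k M] [AddCommGroup N] [Module k N]
    [AddCommGroup P] [Module k P] [AddCommGroup Q] [Module k Q]
    [AddCommGroup R] [Module k R] [AddCommGroup S] [Module k S]
    (f : M →ₗ[k] P →ₗ[k] R) (g : N →ₗ[k] Q →ₗ[k] S)
    (m : M) (n : N) (p : P) (q : Q) :
    biTensor f g (m ⊗ₜ[k] n) (p ⊗ₜ[k] q) = f m p ⊗ₜ[k] g n q := by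
  simp [biTensor]

section HopfAux

variable {k : Type v} [CommRing k] {H : Type u} [AddCommGroup H] [Module k H]
variable (Hh : HomHopfAlgebra k H)

/-- lifted multiplication `H ⊗ H → H`. -/
def HmulL : H ⊗[k] H →ₗ[k] H := TensorProduct.lift Hh.mul

/-- multiplication of the Hom-algebra `H ⊗ H`. -/
def HmB : (H ⊗[k] H) ⊗[k] (H ⊗[k] H) →ₗ[k] H ⊗[k] H :=
  TensorProduct.lift (biTensor Hh.mul Hh.mul)

/-- the automorphism `α ⊗ α` of `H ⊗ H`. -/
def HautB : H ⊗[k] H →ₗ[k] H ⊗[k] H :=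
  TensorProduct.map Hh.aut.toLinearMap Hh.aut.toLinearMap

/-- the convolution unit `h ↦ ε(h) (1 ⊗ 1)`. -/
def HeB : H →ₗ[k] H ⊗[k] H := Hh.counit.smulRight (Hh.one ⊗ₜ[k] Hh.one)

/-- convolution product of maps `H → H ⊗ H`. -/
def Hconv (f g : H →ₗ[k] H ⊗[k] H) : H →ₗ[k] H ⊗[k] H :=
  HmB Hh ∘ₗ (TensorProduct.map f g) ∘ₗ Hh.comul

@[simp] lemma HmulL_tmul (a b : H) : HmulL Hh (a ⊗ₜ[k] b) = Hh.mul a b := by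
  simp [HmulL]

@[simp] lemma HmB_tmul (a b c d : H) :
    HmB Hh ((a ⊗ₜ[k] b) ⊗ₜ[k] (c ⊗ₜ[k] d)) = Hh.mul a c ⊗ₜ[k] Hh.mul b d := by
  simp [HmB]

@[simp] lemma HautB_tmul (a b : H) :
    HautB Hh (a ⊗ₜ[k] b) = Hh.aut a ⊗ₜ[k] Hh.aut b := by simp [HautB]

@[simp] lemma HeB_apply (h : H) : HeB Hh h = Hh.counit h • (Hh.one ⊗ₜ[k] Hh.one) := rfl

lemma Hconv_apply (f g : H →ₗ[k] H ⊗[k] H) (h : H) :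
    Hconv Hh f g h = HmB Hh (TensorProduct.map f g (Hh.comul h)) := rfl

lemma compAA : Hh.aut.toLinearMap ∘ₗ Hh.aut.symm.toLinearMap = LinearMap.id := by
  ext x; simp

lemma compAA' : Hh.aut.symm.toLinearMap ∘ₗ Hh.aut.toLinearMap = LinearMap.id := by
  ext x; simp

lemma counit_symm (h : H) : Hh.counit (Hh.aut.symm h) = Hh.counit h := by
  conv_rhs => rw [← Hh.aut.apply_symm_apply h, Hh.counit_aut]

lemma counit_comp_symm : Hh.counit ∘ₗ Hh.aut.symm.toLinearMap = Hh.counit := by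
  ext h; simp [counit_symm]

lemma comul_symm (h : H) :
    Hh.comul (Hh.aut.symm h)
      = TensorProduct.map Hh.aut.symm.toLinearMap Hh.aut.symm.toLinearMap (Hh.comul h) := by
  have h1 := Hh.comul_aut (Hh.aut.symm h)
  rw [Hh.aut.apply_symm_apply] at h1
  have h2 := congrArg
    (TensorProduct.map Hh.aut.symm.toLinearMap Hh.aut.symm.toLinearMap) h1
  rw [_root_.map_map, compAA'] at h2
  simpa using h2.symm

lemma antipode_symm (h : H) :
    Hh.antipode (Hh.aut.symm h) = Hh.aut.symm (Hh.antipode h) := by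
  have h1 := Hh.antipode_aut (Hh.aut.symm h)
  rw [Hh.aut.apply_symm_apply] at h1
  rw [h1, LinearEquiv.symm_apply_apply]

lemma SautComp : Hh.antipode ∘ₗ Hh.aut.toLinearMap = Hh.aut.toLinearMap ∘ₗ Hh.antipode := by
  ext h; simp [Hh.antipode_aut]

lemma SautCompSymm :
    Hh.antipode ∘ₗ Hh.aut.symm.toLinearMap = Hh.aut.symm.toLinearMap ∘ₗ Hh.antipode := by
  ext h; simp [antipode_symm]

lemma comulAutMap :
    Hh.comul ∘ₗ Hh.aut.toLinearMap
      = TensorProduct.map Hh.aut.toLinearMap Hh.aut.toLinearMap ∘ₗ Hh.comul := by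
  ext h; simp [Hh.comul_aut]

lemma counitComulLeft (h : H) :
    (TensorProduct.lid k H) (TensorProduct.map Hh.counit LinearMap.id (Hh.comul h))
      = Hh.aut.symm h := Hh.counit_comul_left h

lemma counitComulRight (h : H) :
    (TensorProduct.rid k H) (TensorProduct.map LinearMap.id Hh.counit (Hh.comul h))
      = Hh.aut.symm h := Hh.counit_comul_right h

/-- kill the first (scalar) factor of a triple tensor. -/
lemma lidAssoc (t : (H ⊗[k] H) ⊗[k] H) :
    (TensorProduct.lid k (H ⊗[k] H))
        (TensorProduct.map Hh.counit LinearMap.id (TensorProduct.assoc k H H H t))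
      = TensorProduct.map
          ((TensorProduct.lid k H).toLinearMap ∘ₗ TensorProduct.map Hh.counit LinearMap.id)
          LinearMap.id t := by
  induction t using TensorProduct.induction_on with
  | zero => simp
  | add a b ha hb => simp only [map_add, ha, hb]
  | tmul s z =>
    induction s using TensorProduct.induction_on with
    | zero => simp
    | add a b ha hb => simp only [add_tmul, map_add, ha, hb]
    | tmul x y => simp [TensorProduct.smul_tmul']

/-- derived degeneracy lemma: `(id ⊗ α²) ∘ Δ = Δ`. -/
lemma lemD (h : H) :
    TensorProduct.map LinearMap.id (Hh.aut.toLinearMap ∘ₗ Hh.aut.toLinearMap) (Hh.comul h)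
      = Hh.comul h := by
  have hc := Hh.hom_coassoc h
  have e1 := congrArg (fun t => (TensorProduct.lid k (H ⊗[k] H))
      (TensorProduct.map Hh.counit LinearMap.id t)) hc
  -- LHS of e1
  rw [_root_.map_map] at e1
  have hεa : Hh.counit ∘ₗ Hh.aut.symm.toLinearMap = Hh.counit := counit_comp_symm Hh
  rw [hεa, LinearMap.id_comp] at e1
  have lhs1 : (TensorProduct.lid k (H ⊗[k] H))
      (TensorProduct.map Hh.counit Hh.comul (Hh.comul h))
      = Hh.comul (Hh.aut.symm h) := by
    have : TensorProduct.map Hh.counit Hh.comul (Hh.comul h)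
        = TensorProduct.map LinearMap.id Hh.comul
            (TensorProduct.map Hh.counit LinearMap.id (Hh.comul h)) := by
      rw [_root_.map_map]; simp
    rw [this, lidNat, counitComulLeft]
  rw [lhs1, lidAssoc, _root_.map_map] at e1
  -- now simplify the first component composite
  have hfirst : ((TensorProduct.lid k H).toLinearMap
        ∘ₗ TensorProduct.map Hh.counit LinearMap.id) ∘ₗ Hh.comul
      = Hh.aut.symm.toLinearMap := by
    ext x; simpa using counitComulLeft Hh x
  rw [LinearMap.id_comp, hfirst] at e1
  -- e1 : comul (symm h) = map symm α (comul h)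
  have e2 : TensorProduct.map Hh.aut.symm.toLinearMap Hh.aut.symm.toLinearMap (Hh.comul h)
      = TensorProduct.map Hh.aut.symm.toLinearMap Hh.aut.toLinearMap (Hh.comul h) := by
    rw [← comul_symm, e1]
  have e3 := congrArg (TensorProduct.map Hh.aut.toLinearMap Hh.aut.toLinearMap) e2
  rw [_root_.map_map, _root_.map_map, compAA] at e3
  simpa using e3.symm

lemma lemD' (h : H) :
    TensorProduct.map LinearMap.id (Hh.aut.symm.toLinearMap ∘ₗ Hh.aut.symm.toLinearMap)
        (Hh.comul h) = Hh.comul h := by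
  have := congrArg (TensorProduct.map LinearMap.id
    (Hh.aut.symm.toLinearMap ∘ₗ Hh.aut.symm.toLinearMap)) (lemD Hh h)
  rw [_root_.map_map] at this
  have hcmp : (Hh.aut.symm.toLinearMap ∘ₗ Hh.aut.symm.toLinearMap)
      ∘ₗ (Hh.aut.toLinearMap ∘ₗ Hh.aut.toLinearMap) = LinearMap.id := by
    ext x; simp
  rw [hcmp] at this
  simpa using this.symm

/-- `(id ⊗ Δ) ∘ Δ = assoc ∘ ((α ⊗ id) ∘ Δ ⊗ α) ∘ Δ`. -/
lemma lemE1 (h : H) :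
    TensorProduct.map LinearMap.id Hh.comul (Hh.comul h)
      = TensorProduct.assoc k H H H
          (TensorProduct.map ((TensorProduct.map Hh.aut.toLinearMap LinearMap.id) ∘ₗ Hh.comul)
            Hh.aut.toLinearMap (Hh.comul h)) := by
  have hc := Hh.hom_coassoc h
  have e := congrArg (TensorProduct.map Hh.aut.toLinearMap
    (LinearMap.id : H ⊗[k] H →ₗ[k] H ⊗[k] H)) hc
  rw [_root_.map_map, compAA, LinearMap.id_comp] at e
  have eid : TensorProduct.map Hh.aut.toLinearMap
        (LinearMap.id : H ⊗[k] H →ₗ[k] H ⊗[k] H)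
        (TensorProduct.assoc k H H H (TensorProduct.map Hh.comul Hh.aut.toLinearMap (Hh.comul h)))
      = TensorProduct.assoc k H H H
          (TensorProduct.map (TensorProduct.map Hh.aut.toLinearMap LinearMap.id) LinearMap.id
            (TensorProduct.map Hh.comul Hh.aut.toLinearMap (Hh.comul h))) :=
    natAssocL _ _
  rw [eid, _root_.map_map] at e
  simpa using e

/-- `(Δ ⊗ id) ∘ Δ = assoc⁻¹ ∘ (α⁻¹ ⊗ (id ⊗ α⁻¹) ∘ Δ) ∘ Δ`. -/
lemma lemE2 (h : H) :
    TensorProduct.map Hh.comul LinearMap.id (Hh.comul h)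
      = TensorProduct.map LinearMap.id Hh.aut.symm.toLinearMap
          ((TensorProduct.assoc k H H H).symm
            (TensorProduct.map Hh.aut.symm.toLinearMap Hh.comul (Hh.comul h))) := by
  have hc := Hh.hom_coassoc h
  have e0 : TensorProduct.map Hh.comul Hh.aut.toLinearMap (Hh.comul h)
      = (TensorProduct.assoc k H H H).symm
          (TensorProduct.map Hh.aut.symm.toLinearMap Hh.comul (Hh.comul h)) := by
    exact (LinearEquiv.eq_symm_apply _).mpr hc.symm
  have e := congrArg (TensorProduct.map
    (LinearMap.id : H ⊗[k] H →ₗ[k] H ⊗[k] H) Hh.aut.symm.toLinearMap) e0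
  rw [_root_.map_map, compAA', LinearMap.id_comp] at e
  simpa using e

end HopfAux
section HopfAux2

variable {k : Type v} [CommRing k] {H : Type u} [AddCommGroup H] [Module k H]
variable (Hh : HomHopfAlgebra k H)

lemma homassocB (a b c : H ⊗[k] H) :
    HmB Hh (HautB Hh a ⊗ₜ[k] HmB Hh (b ⊗ₜ[k] c))
      = HmB Hh (HmB Hh (a ⊗ₜ[k] b) ⊗ₜ[k] HautB Hh c) := by
  induction a using TensorProduct.induction_on with
  | zero => simp [TensorProduct.zero_tmul]
  | add x y hx hy => simp only [map_add, TensorProduct.add_tmul, hx, hy]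
  | tmul a1 a2 =>
    induction b using TensorProduct.induction_on with
    | zero => simp [TensorProduct.zero_tmul, TensorProduct.tmul_zero]
    | add x y hx hy =>
      simp only [TensorProduct.add_tmul, TensorProduct.tmul_add, map_add, hx, hy]
    | tmul b1 b2 =>
      induction c using TensorProduct.induction_on with
      | zero => simp [TensorProduct.tmul_zero]
      | add x y hx hy =>
        simp only [TensorProduct.add_tmul, TensorProduct.tmul_add, map_add, hx, hy]
      | tmul c1 c2 => simp [Hh.hom_assoc]

lemma mB_one_right (t : H ⊗[k] H) :
    HmB Hh (t ⊗ₜ[k] (Hh.one ⊗ₜ[k] Hh.one)) = HautB Hh t := by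
  induction t using TensorProduct.induction_on with
  | zero => simp [TensorProduct.zero_tmul]
  | add x y hx hy => simp only [TensorProduct.add_tmul, map_add, hx, hy]
  | tmul a b => simp [Hh.mul_one]

lemma mB_one_left (t : H ⊗[k] H) :
    HmB Hh ((Hh.one ⊗ₜ[k] Hh.one) ⊗ₜ[k] t) = HautB Hh t := by
  induction t using TensorProduct.induction_on with
  | zero => simp [TensorProduct.tmul_zero]
  | add x y hx hy => simp only [TensorProduct.tmul_add, map_add, hx, hy]
  | tmul a b => simp [Hh.one_mul]

lemma mulL_autB (t : H ⊗[k] H) : HmulL Hh (HautB Hh t) = Hh.aut (HmulL Hh t) := by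
  induction t using TensorProduct.induction_on with
  | zero => simp
  | add x y hx hy => simp only [map_add, hx, hy]
  | tmul a b => simp [Hh.aut_mul]

lemma mulL_autBsymm (t : H ⊗[k] H) :
    HmulL Hh (TensorProduct.map Hh.aut.symm.toLinearMap Hh.aut.symm.toLinearMap t)
      = Hh.aut.symm (HmulL Hh t) := by
  induction t using TensorProduct.induction_on with
  | zero => simp
  | add x y hx hy => simp only [map_add, hx, hy]
  | tmul a b =>
    simp only [TensorProduct.map_tmul, HmulL_tmul, LinearEquiv.coe_coe]
    apply Hh.aut.injective
    rw [Hh.aut_mul]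
    simp

lemma comulMulMap (t : H ⊗[k] H) :
    Hh.comul (HmulL Hh t) = HmB Hh (TensorProduct.map Hh.comul Hh.comul t) := by
  induction t using TensorProduct.induction_on with
  | zero => simp
  | add x y hx hy => simp only [map_add, hx, hy]
  | tmul a b =>
    simp only [TensorProduct.map_tmul, HmulL_tmul, Hh.comul_mul]
    simp [HmB]

lemma antiConvMap :
    HmulL Hh ∘ₗ (TensorProduct.map Hh.antipode LinearMap.id) ∘ₗ Hh.comul
      = Hh.counit.smulRight Hh.one := by
  ext h
  simpa [HmulL] using Hh.antipode_convolution h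

lemma convAntiMap :
    HmulL Hh ∘ₗ (TensorProduct.map LinearMap.id Hh.antipode) ∘ₗ Hh.comul
      = Hh.counit.smulRight Hh.one := by
  ext h
  simpa [HmulL] using Hh.convolution_antipode h

lemma antipode_one : Hh.antipode Hh.one = Hh.one := by
  have h1 := Hh.antipode_convolution Hh.one
  rw [Hh.comul_one] at h1
  simp only [TensorProduct.map_tmul, TensorProduct.lift.tmul, LinearMap.id_coe, id_eq,
    Hh.counit_one, one_smul] at h1
  rw [Hh.mul_one] at h1
  apply Hh.aut.injective
  rw [h1, Hh.aut_one]

/-- right unit law for convolution. -/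
lemma HconvUnitR (f : H →ₗ[k] H ⊗[k] H) (hf : ∀ h, f (Hh.aut h) = HautB Hh (f h)) :
    Hconv Hh f (HeB Hh) = f := by
  apply LinearMap.ext; intro h
  have key : ∀ t : H ⊗[k] H, HmB Hh (TensorProduct.map f (HeB Hh) t)
      = HautB Hh (f ((TensorProduct.rid k H) (TensorProduct.map LinearMap.id Hh.counit t))) := by
    intro t
    induction t using TensorProduct.induction_on with
    | zero => simp
    | add x y hx hy => simp only [map_add, hx, hy]
    | tmul x c =>
      simp only [TensorProduct.map_tmul, HeB_apply, LinearMap.id_coe, id_eq,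
        TensorProduct.rid_tmul, TensorProduct.tmul_smul, map_smul]
      rw [mB_one_right]
  rw [Hconv_apply, key, counitComulRight, ← hf, Hh.aut.apply_symm_apply]

/-- left unit law for convolution. -/
lemma HconvUnitL (g : H →ₗ[k] H ⊗[k] H) (hg : ∀ h, g (Hh.aut h) = HautB Hh (g h)) :
    Hconv Hh (HeB Hh) g = g := by
  apply LinearMap.ext; intro h
  have key : ∀ t : H ⊗[k] H, HmB Hh (TensorProduct.map (HeB Hh) g t)
      = HautB Hh (g ((TensorProduct.lid k H) (TensorProduct.map Hh.counit LinearMap.id t))) := by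
    intro t
    induction t using TensorProduct.induction_on with
    | zero => simp
    | add x y hx hy => simp only [map_add, hx, hy]
    | tmul c x =>
      simp only [TensorProduct.map_tmul, HeB_apply, LinearMap.id_coe, id_eq,
        TensorProduct.lid_tmul, map_smul]
      rw [← TensorProduct.smul_tmul', map_smul, mB_one_left]
  rw [Hconv_apply, key, counitComulLeft, ← hg, Hh.aut.apply_symm_apply]

/-- `(Δ∘S) * Δ = e`. -/
lemma HC1 : Hconv Hh (Hh.comul ∘ₗ Hh.antipode) Hh.comul = HeB Hh := by
  apply LinearMap.ext; intro h
  rw [Hconv_apply]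
  have e1 : TensorProduct.map (Hh.comul ∘ₗ Hh.antipode) Hh.comul (Hh.comul h)
      = TensorProduct.map Hh.comul Hh.comul
          (TensorProduct.map Hh.antipode LinearMap.id (Hh.comul h)) := by
    rw [_root_.map_map]; simp
  rw [e1, ← comulMulMap]
  have e2 : HmulL Hh (TensorProduct.map Hh.antipode LinearMap.id (Hh.comul h))
      = Hh.counit h • Hh.one := by
    have := congrArg (fun (F : H →ₗ[k] H) => F h) (antiConvMap Hh)
    simpa using this
  rw [e2]
  simp [Hh.comul_one]

end HopfAux2
section HopfAux3

variable {k : Type v} [CommRing k] {H : Type u} [AddCommGroup H] [Module k H]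
variable (Hh : HomHopfAlgebra k H)

lemma Hconv_def (f g : H →ₗ[k] H ⊗[k] H) :
    Hconv Hh f g = HmB Hh ∘ₗ (TensorProduct.map f g) ∘ₗ Hh.comul := rfl

/-- `(S ⊗ S) ∘ comm`. -/
def HX0 : H ⊗[k] H →ₗ[k] H ⊗[k] H :=
  (TensorProduct.map Hh.antipode Hh.antipode) ∘ₗ (TensorProduct.comm k H H).toLinearMap

/-- `G = (S ⊗ S) ∘ comm ∘ Δ`. -/
def HGG : H →ₗ[k] H ⊗[k] H := HX0 Hh ∘ₗ Hh.comul

lemma HGG_def : HGG Hh = HX0 Hh ∘ₗ Hh.comul := rfl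

@[simp] lemma HX0_tmul (a b : H) :
    HX0 Hh (a ⊗ₜ[k] b) = Hh.antipode b ⊗ₜ[k] Hh.antipode a := by simp [HX0]

def HW : ((H ⊗[k] H) ⊗[k] H) ⊗[k] H →ₗ[k] H ⊗[k] H :=
  HmB Hh ∘ₗ (TensorProduct.map LinearMap.id (HX0 Hh))
    ∘ₗ (TensorProduct.assoc k (H ⊗[k] H) H H).toLinearMap

def HW' : (H ⊗[k] (H ⊗[k] H)) ⊗[k] H →ₗ[k] H ⊗[k] H :=
  HW Hh ∘ₗ (TensorProduct.map (TensorProduct.map LinearMap.id Hh.aut.symm.toLinearMap)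
      LinearMap.id)
    ∘ₗ (TensorProduct.map (TensorProduct.assoc k H H H).symm.toLinearMap LinearMap.id)

def Hzeta (_Hh : HomHopfAlgebra k H) : (H ⊗[k] H) ⊗[k] H →ₗ[k] (H ⊗[k] H) ⊗[k] H :=
  (TensorProduct.assoc k H H H).symm.toLinearMap
    ∘ₗ (TensorProduct.map LinearMap.id (TensorProduct.comm k H H).toLinearMap)
    ∘ₗ (TensorProduct.assoc k H H H).toLinearMap

@[simp] lemma Hzeta_tmul (x c d : H) :
    Hzeta Hh ((x ⊗ₜ[k] c) ⊗ₜ[k] d) = (x ⊗ₜ[k] d) ⊗ₜ[k] c := by simp [Hzeta]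

def Hvmap : H →ₗ[k] H :=
  HmulL Hh ∘ₗ (TensorProduct.map Hh.aut.toLinearMap (Hh.antipode ∘ₗ Hh.aut.symm.toLinearMap))
    ∘ₗ Hh.comul

def HOmega : (H ⊗[k] H) ⊗[k] H →ₗ[k] H ⊗[k] H :=
  (TensorProduct.map (HmulL Hh ∘ₗ TensorProduct.map LinearMap.id Hh.antipode) (Hvmap Hh))
    ∘ₗ Hzeta Hh

def HOmega2 : (H ⊗[k] H) ⊗[k] H →ₗ[k] H ⊗[k] H :=
  (TensorProduct.map (HmulL Hh ∘ₗ TensorProduct.map LinearMap.id Hh.antipode)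
      (Hh.counit.smulRight Hh.one))
    ∘ₗ Hzeta Hh

/-- `mB ∘ (Δ ⊗ X0) ∘ assoc = W ∘ ((Δ ⊗ id) ⊗ id)`. -/
lemma PL1 (t : (H ⊗[k] H) ⊗[k] H) :
    HmB Hh (TensorProduct.map Hh.comul (HX0 Hh) (TensorProduct.assoc k H H H t))
      = HW Hh (TensorProduct.map (TensorProduct.map Hh.comul LinearMap.id) LinearMap.id t) := by
  induction t using TensorProduct.induction_on with
  | zero => simp
  | add x y hx hy => simp only [map_add, hx, hy]
  | tmul s z =>
    induction s using TensorProduct.induction_on with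
    | zero => simp
    | add x y hx hy => simp only [TensorProduct.add_tmul, map_add, hx, hy]
    | tmul x y => simp [HW]

lemma SUB0 (x : H) (t : H ⊗[k] H) (d : H) :
    HW' Hh ((x ⊗ₜ[k] t) ⊗ₜ[k] d)
      = Hh.mul x (Hh.antipode d) ⊗ₜ[k]
          HmulL Hh (TensorProduct.map LinearMap.id
            (Hh.antipode ∘ₗ Hh.aut.symm.toLinearMap) t) := by
  induction t using TensorProduct.induction_on with
  | zero => simp [TensorProduct.tmul_zero, TensorProduct.zero_tmul]
  | add a b ha hb =>
    simp only [TensorProduct.tmul_add, TensorProduct.add_tmul, map_add, ha, hb]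
  | tmul y z => simp [HW', HW]

lemma SScompAA :
    (Hh.antipode ∘ₗ Hh.aut.symm.toLinearMap) ∘ₗ (Hh.aut.toLinearMap ∘ₗ Hh.aut.toLinearMap)
      = Hh.aut.toLinearMap ∘ₗ Hh.antipode := by
  ext x; simp [Hh.antipode_aut]

lemma vlem : Hvmap Hh = Hh.counit.smulRight Hh.one := by
  apply LinearMap.ext; intro c
  have d1 : TensorProduct.map Hh.aut.toLinearMap
        (Hh.antipode ∘ₗ Hh.aut.symm.toLinearMap) (Hh.comul c)
      = TensorProduct.map Hh.aut.toLinearMap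
          (Hh.antipode ∘ₗ Hh.aut.symm.toLinearMap)
          (TensorProduct.map LinearMap.id
            (Hh.aut.toLinearMap ∘ₗ Hh.aut.toLinearMap) (Hh.comul c)) := by
    rw [lemD]
  rw [show Hvmap Hh c = HmulL Hh (TensorProduct.map Hh.aut.toLinearMap
      (Hh.antipode ∘ₗ Hh.aut.symm.toLinearMap) (Hh.comul c)) from rfl, d1, _root_.map_map, SScompAA,
    LinearMap.comp_id]
  have d2 : TensorProduct.map Hh.aut.toLinearMap (Hh.aut.toLinearMap ∘ₗ Hh.antipode)
        (Hh.comul c)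
      = TensorProduct.map Hh.aut.toLinearMap Hh.aut.toLinearMap
          (TensorProduct.map LinearMap.id Hh.antipode (Hh.comul c)) := by
    rw [_root_.map_map]; simp
  rw [d2]
  have d3 : HmulL Hh (TensorProduct.map Hh.aut.toLinearMap Hh.aut.toLinearMap
      (TensorProduct.map LinearMap.id Hh.antipode (Hh.comul c)))
      = Hh.aut (HmulL Hh (TensorProduct.map LinearMap.id Hh.antipode (Hh.comul c))) :=
    mulL_autB Hh _
  rw [d3]
  have d4 : HmulL Hh (TensorProduct.map LinearMap.id Hh.antipode (Hh.comul c))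
      = Hh.counit c • Hh.one := by
    have := congrArg (fun (F : H →ₗ[k] H) => F c) (convAntiMap Hh)
    simpa using this
  rw [d4]
  simp [Hh.aut_one]

lemma OmegaEq :
    HW' Hh ∘ₗ (TensorProduct.map (TensorProduct.map LinearMap.id
        ((TensorProduct.map Hh.aut.toLinearMap LinearMap.id) ∘ₗ Hh.comul)) LinearMap.id)
      = HOmega Hh := by
  apply TensorProduct.ext_threefold; intro x c d
  have lhs : (TensorProduct.map (TensorProduct.map LinearMap.id
      ((TensorProduct.map Hh.aut.toLinearMap LinearMap.id) ∘ₗ Hh.comul)) LinearMap.id)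
      ((x ⊗ₜ[k] c) ⊗ₜ[k] d)
      = (x ⊗ₜ[k] (TensorProduct.map Hh.aut.toLinearMap LinearMap.id (Hh.comul c))) ⊗ₜ[k] d := by
    simp
  rw [LinearMap.comp_apply, lhs, SUB0, _root_.map_map]
  simp only [LinearMap.comp_id, LinearMap.id_comp]
  have rhs : HOmega Hh ((x ⊗ₜ[k] c) ⊗ₜ[k] d)
      = Hh.mul x (Hh.antipode d) ⊗ₜ[k] Hvmap Hh c := by
    simp [HOmega]
  rw [rhs]
  rfl

lemma OmegaEq2 : HOmega Hh = HOmega2 Hh := by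
  unfold HOmega HOmega2
  rw [vlem]

lemma OM (t : H ⊗[k] H) (d : H) :
    HOmega2 Hh (t ⊗ₜ[k] d)
      = (HmulL Hh ((TensorProduct.rid k H)
            (TensorProduct.map LinearMap.id Hh.counit t) ⊗ₜ[k] Hh.antipode d)) ⊗ₜ[k] Hh.one := by
  induction t using TensorProduct.induction_on with
  | zero => simp [TensorProduct.zero_tmul]
  | add a b ha hb => simp only [TensorProduct.add_tmul, map_add, ha, hb, TensorProduct.add_tmul]
  | tmul a b =>
    simp only [HOmega2, LinearMap.comp_apply, Hzeta_tmul, TensorProduct.map_tmul,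
      LinearMap.smulRight_apply, LinearMap.id_coe, id_eq, TensorProduct.rid_tmul,
      TensorProduct.tmul_smul, map_smul, HmulL_tmul]
    simp [TensorProduct.smul_tmul', LinearMap.smul_apply]

lemma ZLmap :
    HOmega2 Hh ∘ₗ (TensorProduct.map Hh.comul Hh.aut.toLinearMap)
      = ((TensorProduct.mk k H H).flip Hh.one) ∘ₗ HmulL Hh
          ∘ₗ (TensorProduct.map Hh.aut.symm.toLinearMap
              (Hh.antipode ∘ₗ Hh.aut.toLinearMap)) := by
  apply TensorProduct.ext'; intro c d
  simp only [LinearMap.comp_apply, TensorProduct.map_tmul]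
  rw [OM, counitComulRight]
  simp

lemma compAAA' :
    Hh.aut.symm.toLinearMap ∘ₗ (Hh.aut.symm.toLinearMap ∘ₗ Hh.aut.toLinearMap)
      = Hh.aut.symm.toLinearMap := by
  ext x; simp

/-- the composite first-leg identity `(Δ ⊗ id)∘(α ⊗ id)∘Δ` rewritten through `hom_coassoc`. -/
lemma lemE2' :
    (TensorProduct.map Hh.comul LinearMap.id) ∘ₗ
        ((TensorProduct.map Hh.aut.toLinearMap LinearMap.id) ∘ₗ Hh.comul)
      = (TensorProduct.map LinearMap.id Hh.aut.symm.toLinearMap) ∘ₗ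
          ((TensorProduct.assoc k H H H).symm.toLinearMap ∘ₗ
            ((TensorProduct.map LinearMap.id
                ((TensorProduct.map Hh.aut.toLinearMap LinearMap.id) ∘ₗ Hh.comul))
              ∘ₗ Hh.comul)) := by
  apply LinearMap.ext; intro c
  simp only [LinearMap.comp_apply, LinearEquiv.coe_coe]
  have a1 : TensorProduct.map Hh.aut.toLinearMap LinearMap.id (Hh.comul c)
      = TensorProduct.map LinearMap.id Hh.aut.symm.toLinearMap (Hh.comul (Hh.aut c)) := by
    rw [Hh.comul_aut, _root_.map_map]; simp [compAA']
  have a3 : TensorProduct.map Hh.aut.symm.toLinearMap Hh.comul (Hh.comul (Hh.aut c))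
      = TensorProduct.map LinearMap.id
          (TensorProduct.map Hh.aut.toLinearMap Hh.aut.toLinearMap)
          (TensorProduct.map LinearMap.id Hh.comul (Hh.comul c)) := by
    rw [Hh.comul_aut, _root_.map_map, _root_.map_map, compAA']
    have : Hh.comul ∘ₗ Hh.aut.toLinearMap
        = (TensorProduct.map Hh.aut.toLinearMap Hh.aut.toLinearMap) ∘ₗ Hh.comul :=
      comulAutMap Hh
    rw [this]
    simp
  have rhsEq : TensorProduct.map LinearMap.id Hh.aut.symm.toLinearMap
      ((TensorProduct.assoc k H H H).symm
        (TensorProduct.map LinearMap.id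
          ((TensorProduct.map Hh.aut.toLinearMap LinearMap.id) ∘ₗ Hh.comul) (Hh.comul c)))
      = TensorProduct.map (TensorProduct.map LinearMap.id Hh.aut.toLinearMap)
          Hh.aut.symm.toLinearMap
          ((TensorProduct.assoc k H H H).symm
            (TensorProduct.map LinearMap.id Hh.comul (Hh.comul c))) := by
    have b1 : TensorProduct.map LinearMap.id
        ((TensorProduct.map Hh.aut.toLinearMap LinearMap.id) ∘ₗ Hh.comul) (Hh.comul c)
        = TensorProduct.map LinearMap.id
            (TensorProduct.map Hh.aut.toLinearMap LinearMap.id)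
            (TensorProduct.map LinearMap.id Hh.comul (Hh.comul c)) := by
      rw [_root_.map_map]; simp
    rw [b1, natAssocSymm, _root_.map_map]
    simp only [LinearMap.comp_id, LinearMap.id_comp]
  rw [rhsEq]
  calc TensorProduct.map Hh.comul LinearMap.id
        (TensorProduct.map Hh.aut.toLinearMap LinearMap.id (Hh.comul c))
      = TensorProduct.map LinearMap.id Hh.aut.symm.toLinearMap
          (TensorProduct.map Hh.comul LinearMap.id (Hh.comul (Hh.aut c))) := by
        rw [a1]
        simp only [_root_.map_map, LinearMap.comp_id, LinearMap.id_comp]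
    _ = TensorProduct.map LinearMap.id Hh.aut.symm.toLinearMap
          (TensorProduct.map LinearMap.id Hh.aut.symm.toLinearMap
            ((TensorProduct.assoc k H H H).symm
              (TensorProduct.map Hh.aut.symm.toLinearMap Hh.comul (Hh.comul (Hh.aut c))))) := by
        rw [lemE2]
    _ = TensorProduct.map LinearMap.id Hh.aut.symm.toLinearMap
          (TensorProduct.map LinearMap.id Hh.aut.symm.toLinearMap
            ((TensorProduct.assoc k H H H).symm
              (TensorProduct.map LinearMap.id
                (TensorProduct.map Hh.aut.toLinearMap Hh.aut.toLinearMap)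
                (TensorProduct.map LinearMap.id Hh.comul (Hh.comul c))))) := by
        rw [a3]
    _ = TensorProduct.map LinearMap.id Hh.aut.symm.toLinearMap
          (TensorProduct.map LinearMap.id Hh.aut.symm.toLinearMap
            (TensorProduct.map (TensorProduct.map LinearMap.id Hh.aut.toLinearMap)
              Hh.aut.toLinearMap
              ((TensorProduct.assoc k H H H).symm
                (TensorProduct.map LinearMap.id Hh.comul (Hh.comul c))))) := by
        rw [natAssocSymm]
    _ = TensorProduct.map (TensorProduct.map LinearMap.id Hh.aut.toLinearMap)
          Hh.aut.symm.toLinearMap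
          ((TensorProduct.assoc k H H H).symm
            (TensorProduct.map LinearMap.id Hh.comul (Hh.comul c))) := by
        simp only [_root_.map_map, LinearMap.comp_id, LinearMap.id_comp, compAAA']

lemma aut_symm_one : Hh.aut.symm Hh.one = Hh.one := by
  apply Hh.aut.injective
  rw [Hh.aut.apply_symm_apply, Hh.aut_one]

/-- `Δ * G = e`. -/
lemma HC2 : Hconv Hh Hh.comul (HGG Hh) = HeB Hh := by
  apply LinearMap.ext; intro h
  rw [Hconv_apply]
  have s1 : TensorProduct.map Hh.comul (HGG Hh) (Hh.comul h)
      = TensorProduct.map Hh.comul (HX0 Hh)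
          (TensorProduct.map LinearMap.id Hh.comul (Hh.comul h)) := by
    rw [_root_.map_map, HGG_def]; simp
  rw [s1, lemE1, PL1, _root_.map_map]
  simp only [LinearMap.id_comp, LinearMap.comp_id]
  rw [lemE2']
  have split : TensorProduct.map
      ((TensorProduct.map LinearMap.id Hh.aut.symm.toLinearMap) ∘ₗ
        ((TensorProduct.assoc k H H H).symm.toLinearMap ∘ₗ
          ((TensorProduct.map LinearMap.id
              ((TensorProduct.map Hh.aut.toLinearMap LinearMap.id) ∘ₗ Hh.comul))
            ∘ₗ Hh.comul))) Hh.aut.toLinearMap (Hh.comul h)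
      = TensorProduct.map (TensorProduct.map LinearMap.id Hh.aut.symm.toLinearMap)
          LinearMap.id
          (TensorProduct.map (TensorProduct.assoc k H H H).symm.toLinearMap LinearMap.id
            (TensorProduct.map (TensorProduct.map LinearMap.id
                ((TensorProduct.map Hh.aut.toLinearMap LinearMap.id) ∘ₗ Hh.comul)) LinearMap.id
              (TensorProduct.map Hh.comul Hh.aut.toLinearMap (Hh.comul h)))) := by
    simp only [_root_.map_map, LinearMap.comp_id, LinearMap.id_comp]
  rw [split]
  have hw' : HW Hh (TensorProduct.map
        (TensorProduct.map LinearMap.id Hh.aut.symm.toLinearMap) LinearMap.id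
        (TensorProduct.map (TensorProduct.assoc k H H H).symm.toLinearMap LinearMap.id
          (TensorProduct.map (TensorProduct.map LinearMap.id
              ((TensorProduct.map Hh.aut.toLinearMap LinearMap.id) ∘ₗ Hh.comul)) LinearMap.id
            (TensorProduct.map Hh.comul Hh.aut.toLinearMap (Hh.comul h)))))
      = (HW' Hh ∘ₗ (TensorProduct.map (TensorProduct.map LinearMap.id
          ((TensorProduct.map Hh.aut.toLinearMap LinearMap.id) ∘ₗ Hh.comul)) LinearMap.id))
          (TensorProduct.map Hh.comul Hh.aut.toLinearMap (Hh.comul h)) := rfl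
  rw [hw', OmegaEq, OmegaEq2, ← LinearMap.comp_apply, ZLmap]
  simp only [LinearMap.comp_apply]
  have ccc : (Hh.antipode ∘ₗ Hh.aut.toLinearMap) ∘ₗ
        (Hh.aut.symm.toLinearMap ∘ₗ Hh.aut.symm.toLinearMap)
      = Hh.aut.symm.toLinearMap ∘ₗ Hh.antipode := by
    ext x; simp [antipode_symm]
  have f1 : TensorProduct.map Hh.aut.symm.toLinearMap
        (Hh.antipode ∘ₗ Hh.aut.toLinearMap) (Hh.comul h)
      = TensorProduct.map Hh.aut.symm.toLinearMap Hh.aut.symm.toLinearMap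
          (TensorProduct.map LinearMap.id Hh.antipode (Hh.comul h)) := by
    conv_lhs => rw [← lemD' Hh h]
    rw [_root_.map_map, ccc, _root_.map_map]
  rw [f1, mulL_autBsymm]
  have f2 : HmulL Hh (TensorProduct.map LinearMap.id Hh.antipode (Hh.comul h))
      = Hh.counit h • Hh.one := by
    have := congrArg (fun (F : H →ₗ[k] H) => F h) (convAntiMap Hh)
    simpa using this
  rw [f2]
  simp [aut_symm_one, TensorProduct.tmul_smul, TensorProduct.smul_tmul']

lemma morphFF (h : H) :
    (Hh.comul ∘ₗ Hh.antipode) (Hh.aut h) = HautB Hh ((Hh.comul ∘ₗ Hh.antipode) h) := by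
  simp [Hh.antipode_aut, Hh.comul_aut, HautB]

lemma morphGG (h : H) : HGG Hh (Hh.aut h) = HautB Hh (HGG Hh h) := by
  simp only [HGG_def, LinearMap.comp_apply, Hh.comul_aut]
  have : ∀ t : H ⊗[k] H,
      HX0 Hh (TensorProduct.map Hh.aut.toLinearMap Hh.aut.toLinearMap t)
        = HautB Hh (HX0 Hh t) := by
    intro t
    induction t using TensorProduct.induction_on with
    | zero => simp
    | add a b ha hb => simp only [map_add, ha, hb]
    | tmul a b => simp [Hh.antipode_aut]
  exact this _

lemma fAutComp (f : H →ₗ[k] H ⊗[k] H) (hf : ∀ h, f (Hh.aut h) = HautB Hh (f h)) :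
    f ∘ₗ Hh.aut.toLinearMap = HautB Hh ∘ₗ f := by
  ext x; simp [hf]

lemma XiTheta (g kk : H →ₗ[k] H ⊗[k] H) (hk : ∀ h, kk (Hh.aut h) = HautB Hh (kk h)) :
    HmB Hh ∘ₗ (TensorProduct.map LinearMap.id (HmB Hh ∘ₗ TensorProduct.map g kk))
        ∘ₗ (TensorProduct.assoc k (H ⊗[k] H) H H).toLinearMap
        ∘ₗ (TensorProduct.map (TensorProduct.map (HautB Hh) LinearMap.id) LinearMap.id)
      = (HmB Hh ∘ₗ (TensorProduct.map (HmB Hh ∘ₗ TensorProduct.map LinearMap.id g) kk))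
          ∘ₗ (TensorProduct.map LinearMap.id Hh.aut.toLinearMap) := by
  apply TensorProduct.ext_fourfold; intro w x y z
  simp only [LinearMap.comp_apply, TensorProduct.map_tmul, LinearMap.id_coe, id_eq,
    LinearEquiv.coe_coe, TensorProduct.assoc_tmul]
  rw [homassocB, ← hk]

/-- convolution is associative when the outer arguments commute with the automorphisms. -/
lemma HconvAssoc (f g kk : H →ₗ[k] H ⊗[k] H)
    (hf : ∀ h, f (Hh.aut h) = HautB Hh (f h))
    (hk : ∀ h, kk (Hh.aut h) = HautB Hh (kk h)) :
    Hconv Hh f (Hconv Hh g kk) = Hconv Hh (Hconv Hh f g) kk := by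
  apply LinearMap.ext; intro h
  rw [Hconv_apply, Hconv_apply]
  have L1 : TensorProduct.map f (Hconv Hh g kk) (Hh.comul h)
      = TensorProduct.map LinearMap.id (HmB Hh ∘ₗ TensorProduct.map g kk)
          (TensorProduct.map f Hh.comul (Hh.comul h)) := by
    simp only [_root_.map_map, Hconv_def, LinearMap.id_comp, LinearMap.comp_assoc]
  have L2 : TensorProduct.map f Hh.comul (Hh.comul h)
      = TensorProduct.map f LinearMap.id
          (TensorProduct.map LinearMap.id Hh.comul (Hh.comul h)) := by
    rw [_root_.map_map]; simp
  rw [L1, L2, lemE1, natAssocL, _root_.map_map]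
  simp only [LinearMap.comp_id, LinearMap.id_comp]
  have c1 : (TensorProduct.map f LinearMap.id) ∘ₗ
        ((TensorProduct.map Hh.aut.toLinearMap LinearMap.id) ∘ₗ Hh.comul)
      = (TensorProduct.map (HautB Hh) LinearMap.id) ∘ₗ
          ((TensorProduct.map f LinearMap.id) ∘ₗ Hh.comul) := by
    rw [← LinearMap.comp_assoc, ← LinearMap.comp_assoc]
    congr 1
    rw [← TensorProduct.map_comp, ← TensorProduct.map_comp, fAutComp Hh f hf]
  rw [c1]
  have split : TensorProduct.map ((TensorProduct.map (HautB Hh) LinearMap.id) ∘ₗ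
        ((TensorProduct.map f LinearMap.id) ∘ₗ Hh.comul)) Hh.aut.toLinearMap (Hh.comul h)
      = TensorProduct.map (TensorProduct.map (HautB Hh) LinearMap.id) LinearMap.id
          (TensorProduct.map ((TensorProduct.map f LinearMap.id) ∘ₗ Hh.comul)
            Hh.aut.toLinearMap (Hh.comul h)) := by
    simp only [_root_.map_map, LinearMap.comp_id, LinearMap.id_comp]
  rw [split]
  have theta := congrArg (fun (F : ((H ⊗[k] H) ⊗[k] H) ⊗[k] H →ₗ[k] H ⊗[k] H) =>
    F (TensorProduct.map ((TensorProduct.map f LinearMap.id) ∘ₗ Hh.comul)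
        Hh.aut.toLinearMap (Hh.comul h))) (XiTheta Hh g kk hk)
  simp only [LinearMap.comp_apply, LinearEquiv.coe_coe] at theta
  rw [theta]
  have R1 : TensorProduct.map LinearMap.id Hh.aut.toLinearMap
        (TensorProduct.map ((TensorProduct.map f LinearMap.id) ∘ₗ Hh.comul)
          Hh.aut.toLinearMap (Hh.comul h))
      = TensorProduct.map ((TensorProduct.map f LinearMap.id) ∘ₗ Hh.comul) LinearMap.id
          (TensorProduct.map LinearMap.id
            (Hh.aut.toLinearMap ∘ₗ Hh.aut.toLinearMap) (Hh.comul h)) := by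
    rw [_root_.map_map, _root_.map_map]; simp
  rw [R1, lemD]
  have R2 : TensorProduct.map ((TensorProduct.map f LinearMap.id) ∘ₗ Hh.comul)
        LinearMap.id (Hh.comul h)
      = TensorProduct.map (TensorProduct.map f LinearMap.id) LinearMap.id
          (TensorProduct.map Hh.comul LinearMap.id (Hh.comul h)) := by
    rw [_root_.map_map]; simp
  rw [R2, ← LinearMap.comp_apply (TensorProduct.map (HmB Hh ∘ₗ TensorProduct.map LinearMap.id g) kk)]
  have c2 : (TensorProduct.map (HmB Hh ∘ₗ TensorProduct.map LinearMap.id g) kk) ∘ₗ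
        (TensorProduct.map (TensorProduct.map f LinearMap.id) LinearMap.id)
      = TensorProduct.map (HmB Hh ∘ₗ TensorProduct.map f g) kk := by
    rw [← TensorProduct.map_comp]
    congr 1
    rw [LinearMap.comp_assoc, ← TensorProduct.map_comp]
    simp
  rw [c2]
  have R3 : TensorProduct.map (Hconv Hh f g) kk (Hh.comul h)
      = TensorProduct.map (HmB Hh ∘ₗ TensorProduct.map f g) kk
          (TensorProduct.map Hh.comul LinearMap.id (Hh.comul h)) := by
    simp only [_root_.map_map, Hconv_def, LinearMap.comp_id, LinearMap.comp_assoc]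
  rw [R3]

/-- the antipode is anti-comultiplicative. -/
lemma HantiComul : Hh.comul ∘ₗ Hh.antipode = HGG Hh := by
  have h1 := HconvUnitL Hh (HGG Hh) (morphGG Hh)
  have h2 := HconvUnitR Hh (Hh.comul ∘ₗ Hh.antipode) (morphFF Hh)
  calc Hh.comul ∘ₗ Hh.antipode
      = Hconv Hh (Hh.comul ∘ₗ Hh.antipode) (HeB Hh) := h2.symm
    _ = Hconv Hh (Hh.comul ∘ₗ Hh.antipode) (Hconv Hh Hh.comul (HGG Hh)) := by rw [HC2]
    _ = Hconv Hh (Hconv Hh (Hh.comul ∘ₗ Hh.antipode) Hh.comul) (HGG Hh) :=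
        HconvAssoc Hh _ _ _ (morphFF Hh) (morphGG Hh)
    _ = Hconv Hh (HeB Hh) (HGG Hh) := by rw [HC1]
    _ = HGG Hh := h1

lemma antiComul_apply (h : H) :
    Hh.comul (Hh.antipode h)
      = TensorProduct.map Hh.antipode Hh.antipode
          ((TensorProduct.comm k H H) (Hh.comul h)) := by
  have := congrArg (fun (F : H →ₗ[k] H ⊗[k] H) => F h) (HantiComul Hh)
  simpa [HGG_def, HX0] using this

end HopfAux3
section HopfAux4

variable {k : Type v} [CommRing k] {H : Type u} [AddCommGroup H] [Module k H]
variable (Hh : HomHopfAlgebra k H)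

lemma mapIdAl_mapAlId :
    (TensorProduct.map LinearMap.id Hh.aut.toLinearMap) ∘ₗ
        (TensorProduct.map Hh.aut.toLinearMap LinearMap.id)
      = TensorProduct.map Hh.aut.toLinearMap Hh.aut.toLinearMap := by
  rw [← TensorProduct.map_comp]; simp

/-- `(id ⊗ Δ)∘(id ⊗ α)∘Δ = assoc ∘ ((Δ∘α) ⊗ id) ∘ Δ`. -/
lemma lemH4 :
    (TensorProduct.map LinearMap.id Hh.comul) ∘ₗ
        ((TensorProduct.map LinearMap.id Hh.aut.toLinearMap) ∘ₗ Hh.comul)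
      = (TensorProduct.assoc k H H H).toLinearMap ∘ₗ
          ((TensorProduct.map (Hh.comul ∘ₗ Hh.aut.toLinearMap) LinearMap.id) ∘ₗ Hh.comul) := by
  apply LinearMap.ext; intro c
  simp only [LinearMap.comp_apply, LinearEquiv.coe_coe]
  rw [_root_.map_map, comulAutMap]
  rw [← _root_.map_map LinearMap.id
    (TensorProduct.map Hh.aut.toLinearMap Hh.aut.toLinearMap) LinearMap.id Hh.comul
    (Hh.comul c)]
  rw [lemE1, natAssoc, _root_.map_map]
  have cmp : (TensorProduct.map LinearMap.id Hh.aut.toLinearMap) ∘ₗ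
        ((TensorProduct.map Hh.aut.toLinearMap LinearMap.id) ∘ₗ Hh.comul)
      = (TensorProduct.map Hh.aut.toLinearMap Hh.aut.toLinearMap) ∘ₗ Hh.comul := by
    rw [← LinearMap.comp_assoc, mapIdAl_mapAlId]
  rw [cmp]
  have split : TensorProduct.map
        ((TensorProduct.map Hh.aut.toLinearMap Hh.aut.toLinearMap) ∘ₗ Hh.comul)
        (Hh.aut.toLinearMap ∘ₗ Hh.aut.toLinearMap) (Hh.comul c)
      = TensorProduct.map
          ((TensorProduct.map Hh.aut.toLinearMap Hh.aut.toLinearMap) ∘ₗ Hh.comul)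
          LinearMap.id
          (TensorProduct.map LinearMap.id
            (Hh.aut.toLinearMap ∘ₗ Hh.aut.toLinearMap) (Hh.comul c)) := by
    rw [_root_.map_map]; simp
  rw [split, lemD, ← comulAutMap]

end HopfAux4

section TraceAux

variable {k : Type v} [CommRing k] {H A : Type u}
  [AddCommGroup H] [Module k H] [AddCommGroup A] [Module k A]
variable (Hh : HomHopfAlgebra k H) (AA : HomComoduleAlgebra k Hh A)
variable (Φ : TotalIntegral k Hh AA)
variable {M : Type u} [AddCommGroup M] [Module k M] (Mm : RelHopfModule k Hh AA M)

/-- compatibility as a map identity. -/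
lemma compatMap :
    Mm.coact ∘ₗ TensorProduct.lift Mm.act
      = TensorProduct.lift (biTensor Mm.act Hh.mul) ∘ₗ
          (TensorProduct.map Mm.coact AA.coact) := by
  apply TensorProduct.ext'; intro m a
  simpa using Mm.compat m a

/-- colinearity of `φ ∘ S` as a map identity, using anti-comultiplicativity. -/
lemma colinSMap :
    AA.coact ∘ₗ (Φ.toFun ∘ₗ Hh.antipode)
      = (TensorProduct.map (Φ.toFun ∘ₗ Hh.antipode) Hh.antipode) ∘ₗ
          ((TensorProduct.comm k H H).toLinearMap ∘ₗ Hh.comul) := by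
  apply LinearMap.ext; intro h
  simp only [LinearMap.comp_apply, LinearEquiv.coe_coe]
  rw [Φ.colinear, antiComul_apply, _root_.map_map]
  simp

def TPP : (M ⊗[k] H) ⊗[k] (H ⊗[k] H) →ₗ[k] M ⊗[k] H :=
  TensorProduct.lift (biTensor Mm.act Hh.mul) ∘ₗ
    (TensorProduct.map LinearMap.id
      ((TensorProduct.map (Φ.toFun ∘ₗ Hh.antipode) Hh.antipode) ∘ₗ
        (TensorProduct.comm k H H).toLinearMap))

def TNN : M ⊗[k] (H ⊗[k] H) →ₗ[k] M ⊗[k] H :=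
  ((TensorProduct.mk k M H).flip Hh.one) ∘ₗ TensorProduct.lift Mm.act ∘ₗ
    (TensorProduct.map LinearMap.id
      ((TensorProduct.lid k A).toLinearMap ∘ₗ
        (TensorProduct.map Hh.counit (Φ.toFun ∘ₗ Hh.antipode))))

def TKK : M ⊗[k] (H ⊗[k] H) →ₗ[k] M ⊗[k] H :=
  TPP Hh AA Φ Mm ∘ₗ (TensorProduct.assoc k M H (H ⊗[k] H)).symm.toLinearMap ∘ₗ
    (TensorProduct.map LinearMap.id
      ((TensorProduct.assoc k H H H).toLinearMap ∘ₗ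
        (TensorProduct.map (Hh.comul ∘ₗ Hh.aut.toLinearMap) LinearMap.id)))

lemma SUBK (x : M) (t : H ⊗[k] H) (d : H) :
    TPP Hh AA Φ Mm ((TensorProduct.assoc k M H (H ⊗[k] H)).symm
        (x ⊗ₜ[k] (TensorProduct.assoc k H H H (t ⊗ₜ[k] d))))
      = Mm.act x (Φ.toFun (Hh.antipode d)) ⊗ₜ[k]
          HmulL Hh (TensorProduct.map LinearMap.id Hh.antipode t) := by
  induction t using TensorProduct.induction_on with
  | zero => simp [TensorProduct.zero_tmul, TensorProduct.tmul_zero]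
  | add a b ha hb =>
    simp only [TensorProduct.add_tmul, TensorProduct.tmul_add, map_add, ha, hb]
  | tmul p q => simp [TPP]

lemma KKlem : TKK Hh AA Φ Mm = TNN Hh AA Φ Mm := by
  apply TensorProduct.ext'; intro x t
  induction t using TensorProduct.induction_on with
  | zero => simp [TensorProduct.tmul_zero]
  | add a b ha hb => simp only [TensorProduct.tmul_add, map_add, ha, hb]
  | tmul c d =>
    have lhs : TKK Hh AA Φ Mm (x ⊗ₜ[k] (c ⊗ₜ[k] d))
        = TPP Hh AA Φ Mm ((TensorProduct.assoc k M H (H ⊗[k] H)).symm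
            (x ⊗ₜ[k] (TensorProduct.assoc k H H H
              ((Hh.comul (Hh.aut c)) ⊗ₜ[k] d)))) := rfl
    rw [lhs, SUBK]
    have f2 : HmulL Hh (TensorProduct.map LinearMap.id Hh.antipode (Hh.comul (Hh.aut c)))
        = Hh.counit c • Hh.one := by
      have := congrArg (fun (F : H →ₗ[k] H) => F (Hh.aut c)) (convAntiMap Hh)
      simpa [Hh.counit_aut] using this
    rw [f2]
    have rhs : TNN Hh AA Φ Mm (x ⊗ₜ[k] (c ⊗ₜ[k] d))
        = (Hh.counit c • Mm.act x (Φ.toFun (Hh.antipode d))) ⊗ₜ[k] Hh.one := by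
      simp [TNN, TensorProduct.smul_tmul']
    rw [rhs]
    simp [TensorProduct.tmul_smul, TensorProduct.smul_tmul']

lemma innerlem :
    (TensorProduct.lid k A).toLinearMap ∘ₗ
        ((TensorProduct.map Hh.counit (Φ.toFun ∘ₗ Hh.antipode)) ∘ₗ Hh.comul)
      = Φ.toFun ∘ₗ (Hh.antipode ∘ₗ Hh.aut.symm.toLinearMap) := by
  apply LinearMap.ext; intro c
  simp only [LinearMap.comp_apply, LinearEquiv.coe_coe]
  have s1 : TensorProduct.map Hh.counit (Φ.toFun ∘ₗ Hh.antipode) (Hh.comul c)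
      = TensorProduct.map LinearMap.id (Φ.toFun ∘ₗ Hh.antipode)
          (TensorProduct.map Hh.counit LinearMap.id (Hh.comul c)) := by
    rw [_root_.map_map]; simp
  rw [s1, lidNat, counitComulLeft]
  simp [antipode_symm]

lemma betaSymmPhi (h : H) :
    AA.aut.symm (Φ.toFun h) = Φ.toFun (Hh.aut.symm h) := by
  apply AA.aut.injective
  rw [AA.aut.apply_symm_apply, ← Φ.commutes, Hh.aut.apply_symm_apply]

lemma muSymmAct (y : M) (a : A) :
    Mm.aut.symm (Mm.act y a) = Mm.act (Mm.aut.symm y) (AA.aut.symm a) := by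
  apply Mm.aut.injective
  rw [Mm.aut.apply_symm_apply, Mm.aut_act, Mm.aut.apply_symm_apply,
    AA.aut.apply_symm_apply]

lemma finallem :
    TensorProduct.lift Mm.act ∘ₗ
        (TensorProduct.map Mm.aut.symm.toLinearMap
          (Φ.toFun ∘ₗ (Hh.antipode ∘ₗ Hh.aut.symm.toLinearMap)))
      = Mm.aut.symm.toLinearMap ∘ₗ (TensorProduct.lift Mm.act ∘ₗ
          (TensorProduct.map LinearMap.id (Φ.toFun ∘ₗ Hh.antipode))) := by
  apply TensorProduct.ext'; intro x c
  simp only [LinearMap.comp_apply, TensorProduct.map_tmul, TensorProduct.lift.tmul,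
    LinearEquiv.coe_coe, LinearMap.id_coe, id_eq]
  rw [muSymmAct, betaSymmPhi, antipode_symm]

/-- Part 1: the trace lands in the coinvariants. -/
lemma tracePart1 (m : M) :
    Mm.coact (TensorProduct.lift Mm.act
        (TensorProduct.map LinearMap.id (Φ.toFun ∘ₗ Hh.antipode) (Mm.coact m)))
      = Mm.aut.symm (TensorProduct.lift Mm.act
          (TensorProduct.map LinearMap.id (Φ.toFun ∘ₗ Hh.antipode) (Mm.coact m)))
          ⊗ₜ[k] Hh.one := by
  have h1 := congrArg (fun (F : M ⊗[k] A →ₗ[k] M ⊗[k] H) =>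
    F (TensorProduct.map LinearMap.id (Φ.toFun ∘ₗ Hh.antipode) (Mm.coact m)))
    (compatMap Hh AA Mm)
  simp only [LinearMap.comp_apply] at h1
  rw [h1, _root_.map_map]
  simp only [LinearMap.comp_id]
  rw [colinSMap Hh AA Φ]
  -- split off the inner `(map (φ∘S) S) ∘ comm`
  have h2 : TensorProduct.map Mm.coact
      ((TensorProduct.map (Φ.toFun ∘ₗ Hh.antipode) Hh.antipode) ∘ₗ
        ((TensorProduct.comm k H H).toLinearMap ∘ₗ Hh.comul)) (Mm.coact m)
      = TensorProduct.map LinearMap.id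
          ((TensorProduct.map (Φ.toFun ∘ₗ Hh.antipode) Hh.antipode) ∘ₗ
            (TensorProduct.comm k H H).toLinearMap)
          (TensorProduct.map Mm.coact Hh.comul (Mm.coact m)) := by
    simp only [_root_.map_map, LinearMap.id_comp, LinearMap.comp_id, LinearMap.comp_assoc]
  rw [h2]
  -- rewrite (ρ ⊗ Δ) ρ using hom_coassoc and lemH4
  have KEY : TensorProduct.map Mm.coact Hh.comul (Mm.coact m)
      = (TensorProduct.assoc k M H (H ⊗[k] H)).symm
          (TensorProduct.map LinearMap.id
            ((TensorProduct.assoc k H H H).toLinearMap ∘ₗ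
              (TensorProduct.map (Hh.comul ∘ₗ Hh.aut.toLinearMap) LinearMap.id))
            (TensorProduct.map Mm.aut.symm.toLinearMap Hh.comul (Mm.coact m))) := by
    have e1 : TensorProduct.map Mm.coact Hh.comul (Mm.coact m)
        = TensorProduct.map LinearMap.id Hh.comul
            (TensorProduct.map Mm.coact LinearMap.id (Mm.coact m)) := by
      rw [_root_.map_map]; simp
    have e2 : TensorProduct.map Mm.coact LinearMap.id (Mm.coact m)
        = TensorProduct.map LinearMap.id Hh.aut.toLinearMap
            (TensorProduct.map Mm.coact Hh.aut.symm.toLinearMap (Mm.coact m)) := by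
      rw [_root_.map_map, compAA]; simp
    have e3 : TensorProduct.map Mm.coact Hh.aut.symm.toLinearMap (Mm.coact m)
        = (TensorProduct.assoc k M H H).symm
            (TensorProduct.map Mm.aut.symm.toLinearMap Hh.comul (Mm.coact m)) :=
      (LinearEquiv.eq_symm_apply _).mpr (Mm.hom_coassoc m)
    rw [e1, e2, e3, natSymm2]
    have e5 : TensorProduct.map LinearMap.id (TensorProduct.map LinearMap.id Hh.aut.toLinearMap)
          (TensorProduct.map Mm.aut.symm.toLinearMap Hh.comul (Mm.coact m))
        = TensorProduct.map Mm.aut.symm.toLinearMap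
            ((TensorProduct.map LinearMap.id Hh.aut.toLinearMap) ∘ₗ Hh.comul) (Mm.coact m) := by
      rw [_root_.map_map]; simp
    rw [e5, natSymm2]
    have e7 : TensorProduct.map LinearMap.id (TensorProduct.map LinearMap.id Hh.comul)
          (TensorProduct.map Mm.aut.symm.toLinearMap
            ((TensorProduct.map LinearMap.id Hh.aut.toLinearMap) ∘ₗ Hh.comul) (Mm.coact m))
        = TensorProduct.map Mm.aut.symm.toLinearMap
            ((TensorProduct.map LinearMap.id Hh.comul) ∘ₗ
              ((TensorProduct.map LinearMap.id Hh.aut.toLinearMap) ∘ₗ Hh.comul)) (Mm.coact m) := by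
      rw [_root_.map_map]; simp
    rw [e7, lemH4]
    have e8 : TensorProduct.map Mm.aut.symm.toLinearMap
          ((TensorProduct.assoc k H H H).toLinearMap ∘ₗ
            ((TensorProduct.map (Hh.comul ∘ₗ Hh.aut.toLinearMap) LinearMap.id) ∘ₗ Hh.comul))
          (Mm.coact m)
        = TensorProduct.map LinearMap.id
            ((TensorProduct.assoc k H H H).toLinearMap ∘ₗ
              (TensorProduct.map (Hh.comul ∘ₗ Hh.aut.toLinearMap) LinearMap.id))
            (TensorProduct.map Mm.aut.symm.toLinearMap Hh.comul (Mm.coact m)) := by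
      simp only [_root_.map_map, LinearMap.id_comp, LinearMap.comp_id, LinearMap.comp_assoc]
    rw [e8]
  rw [KEY]
  -- now everything is `TKK` applied
  have tkk : TensorProduct.lift (biTensor Mm.act Hh.mul)
      (TensorProduct.map LinearMap.id
        ((TensorProduct.map (Φ.toFun ∘ₗ Hh.antipode) Hh.antipode) ∘ₗ
          (TensorProduct.comm k H H).toLinearMap)
        ((TensorProduct.assoc k M H (H ⊗[k] H)).symm
          (TensorProduct.map LinearMap.id
            ((TensorProduct.assoc k H H H).toLinearMap ∘ₗ
              (TensorProduct.map (Hh.comul ∘ₗ Hh.aut.toLinearMap) LinearMap.id))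
            (TensorProduct.map Mm.aut.symm.toLinearMap Hh.comul (Mm.coact m)))))
      = TKK Hh AA Φ Mm (TensorProduct.map Mm.aut.symm.toLinearMap Hh.comul (Mm.coact m)) :=
    rfl
  rw [tkk, KKlem]
  -- unfold TNN and simplify the inner composite
  have tnn : TNN Hh AA Φ Mm (TensorProduct.map Mm.aut.symm.toLinearMap Hh.comul (Mm.coact m))
      = ((TensorProduct.mk k M H).flip Hh.one)
          (TensorProduct.lift Mm.act
            (TensorProduct.map LinearMap.id
              ((TensorProduct.lid k A).toLinearMap ∘ₗ
                (TensorProduct.map Hh.counit (Φ.toFun ∘ₗ Hh.antipode)))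
              (TensorProduct.map Mm.aut.symm.toLinearMap Hh.comul (Mm.coact m)))) := rfl
  rw [tnn]
  have inner : TensorProduct.map LinearMap.id
        ((TensorProduct.lid k A).toLinearMap ∘ₗ
          (TensorProduct.map Hh.counit (Φ.toFun ∘ₗ Hh.antipode)))
        (TensorProduct.map Mm.aut.symm.toLinearMap Hh.comul (Mm.coact m))
      = TensorProduct.map Mm.aut.symm.toLinearMap
          (Φ.toFun ∘ₗ (Hh.antipode ∘ₗ Hh.aut.symm.toLinearMap)) (Mm.coact m) := by
    rw [_root_.map_map]
    simp only [LinearMap.id_comp, LinearMap.comp_assoc]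
    rw [innerlem Hh AA Φ]
  rw [inner]
  have fin := congrArg (fun (F : M ⊗[k] H →ₗ[k] M) => F (Mm.coact m))
    (finallem Hh AA Φ Mm)
  simp only [LinearMap.comp_apply] at fin
  rw [fin]
  simp

end TraceAux
end AuxProofs
section Statements

variable {k : Type v} [CommRing k] {H A : Type u}
  [AddCommGroup H] [Module k H] [AddCommGroup A] [Module k A]

/-- For a total integral `φ` and a relative Hom-Hopf module `(M,μ)`, the
trace map `τ_M(m) = m₍₀₎·φ(S(m₍₁₎))` lands in
`M₀ = {m : ρ_M(m) = μ⁻¹(m) ⊗ 1_H}` and restricts to the identity on `M₀`. -/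
theorem trace_into_coinvariants {M : Type u} [AddCommGroup M] [Module k M]
    (Hh : HomHopfAlgebra k H) (AA : HomComoduleAlgebra k Hh A)
    (Φ : TotalIntegral k Hh AA) (Mm : RelHopfModule k Hh AA M) :
    let M₀ : Set M := {m | Mm.coact m = Mm.aut.symm m ⊗ₜ[k] Hh.one}
    let τ : M →ₗ[k] M := traceMap Hh.antipode Φ.toFun Mm.act Mm.coact
    (∀ m : M, τ m ∈ M₀) ∧ (∀ m ∈ M₀, τ m = m) := by
  intro M₀ τ
  have τdef : ∀ m : M, τ m = TensorProduct.lift Mm.act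
      (TensorProduct.map LinearMap.id (Φ.toFun ∘ₗ Hh.antipode) (Mm.coact m)) :=
    fun m => rfl
  constructor
  · intro m
    show Mm.coact (τ m) = Mm.aut.symm (τ m) ⊗ₜ[k] Hh.one
    rw [τdef]
    exact tracePart1 Hh AA Φ Mm m
  · intro m hm
    have hm' : Mm.coact m = Mm.aut.symm m ⊗ₜ[k] Hh.one := hm
    rw [τdef, hm']
    simp only [TensorProduct.map_tmul, TensorProduct.lift.tmul, LinearMap.comp_apply,
      LinearMap.id_coe, id_eq, LinearEquiv.coe_coe]
    rw [antipode_one, Φ.normal, Mm.act_one, Mm.aut.apply_symm_apply]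

end Statements
end

section
/- Let (H,α) be a monoidal Hom-Hopf algebra and (A,β) a right (H,α)-Hom-comodule algebra with a total integral φ:H→A. Set C = {b∈A : ρ_A(b)=β⁻¹(b)⊗1_H}. Then the map τ_A:(A,β)→(C,β) defined by τ_A(b) = b_(0)φ(S(b_(1))) is a morphism of left (C,β)-Hom-modules, i.e. τ_A(ca)=cτ_A(a) for all c∈C, a∈A and τ_A∘β=β∘τ_A; moreover τ_A restricts to the identity on C, so that (C,β) is a direct summand of (A,β) as a left (C,β)-Hom-module. -/
/- Preliminaries: monoidal Hom-structures (Caenepeel–Goyvaerts style), following the paper. -/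

open TensorProduct

section GenericHelpers
variable {k : Type*} [CommRing k] {M N P : Type*}
  [AddCommGroup M] [Module k M] [AddCommGroup N] [Module k N] [AddCommGroup P] [Module k P]

lemma assoc_tmul_opaque (q : M ⊗[k] N) (c : P) :
    (TensorProduct.assoc k M N P) (q ⊗ₜ[k] c)
      = (TensorProduct.map LinearMap.id ((TensorProduct.mk k N P).flip c)) q := by
  induction q using TensorProduct.induction_on with
  | zero => simp
  | tmul a b => simp [TensorProduct.assoc_tmul]
  | add x y hx hy => simp only [add_tmul, map_add, hx, hy]

lemma assoc_symm_tmul_opaque (a : M) (q : N ⊗[k] P) :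
    (TensorProduct.assoc k M N P).symm (a ⊗ₜ[k] q)
      = (TensorProduct.map (TensorProduct.mk k M N a) LinearMap.id) q := by
  induction q using TensorProduct.induction_on with
  | zero => simp
  | tmul a b => simp [TensorProduct.assoc_symm_tmul]
  | add x y hx hy => simp only [tmul_add, map_add, hx, hy]

lemma map_map_opaque {M' N' M'' N'' : Type*} [AddCommGroup M'] [Module k M'] [AddCommGroup N'] [Module k N']
    [AddCommGroup M''] [Module k M''] [AddCommGroup N''] [Module k N'']
    (f : M' →ₗ[k] M'') (g : N' →ₗ[k] N'') (f' : M →ₗ[k] M') (g' : N →ₗ[k] N') (t : M ⊗[k] N) :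
    TensorProduct.map f g (TensorProduct.map f' g' t) = TensorProduct.map (f ∘ₗ f') (g ∘ₗ g') t := by
  rw [TensorProduct.map_comp]; rfl

lemma comm_map_opaque {M' N' : Type*} [AddCommGroup M'] [Module k M'] [AddCommGroup N'] [Module k N']
    (f : M →ₗ[k] M') (g : N →ₗ[k] N') (t : M ⊗[k] N) :
    (TensorProduct.comm k M' N') (TensorProduct.map f g t)
      = TensorProduct.map g f ((TensorProduct.comm k M N) t) := by
  induction t using TensorProduct.induction_on with
  | zero => simp
  | tmul a b => simp
  | add x y hx hy => simp only [map_add, hx, hy]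

end GenericHelpers

noncomputable section HopfAux
variable {k : Type v} [CommRing k] {H : Type u} [AddCommGroup H] [Module k H]
variable (Hh : HomHopfAlgebra k H)

namespace HomHopfAlgebra

/-- `α` as a linear map. -/
abbrev al : H →ₗ[k] H := Hh.aut.toLinearMap
/-- `α⁻¹` as a linear map. -/
abbrev ai : H →ₗ[k] H := Hh.aut.symm.toLinearMap

/-- componentwise multiplication on `H ⊗ H`. -/
def M2 : (H ⊗[k] H) ⊗[k] (H ⊗[k] H) →ₗ[k] H ⊗[k] H :=
  TensorProduct.lift (biTensor Hh.mul Hh.mul)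

@[simp] lemma M2_tmul (a b c d : H) :
    Hh.M2 ((a ⊗ₜ[k] b) ⊗ₜ[k] (c ⊗ₜ[k] d)) = Hh.mul a c ⊗ₜ[k] Hh.mul b d := by
  simp [M2, biTensor]

lemma M2_tmul_opaque (a b : H) (q : H ⊗[k] H) :
    Hh.M2 ((a ⊗ₜ[k] b) ⊗ₜ[k] q) = TensorProduct.map (Hh.mul a) (Hh.mul b) q := by
  simp [M2, biTensor]

/-- `S² := α⁻² ∘ S`. -/
def S2 : H →ₗ[k] H := Hh.ai ∘ₗ Hh.ai ∘ₗ Hh.antipode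

/-- `K(x) = α⁻²S(x₂) ⊗ S(x₁)`. -/
def Kmap : H →ₗ[k] H ⊗[k] H :=
  (TensorProduct.map Hh.S2 Hh.antipode) ∘ₗ (TensorProduct.comm k H H).toLinearMap ∘ₗ Hh.comul

/-- `F = Δ ∘ S`. -/
def Fmap : H →ₗ[k] H ⊗[k] H := Hh.comul ∘ₗ Hh.antipode

/-- convolution product on maps `H → H ⊗ H`. -/
def conv (f g : H →ₗ[k] H ⊗[k] H) : H →ₗ[k] H ⊗[k] H :=
  Hh.M2 ∘ₗ TensorProduct.map f g ∘ₗ Hh.comul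

/-- unit of convolution for target `H`. -/
def uH1 : H →ₗ[k] H := LinearMap.toSpanSingleton k H Hh.one ∘ₗ Hh.counit

/-- unit of convolution for target `H ⊗ H`. -/
def uH2 : H →ₗ[k] H ⊗[k] H :=
  LinearMap.toSpanSingleton k (H ⊗[k] H) (Hh.one ⊗ₜ[k] Hh.one) ∘ₗ Hh.counit

@[simp] lemma uH1_apply (x : H) : Hh.uH1 x = Hh.counit x • Hh.one := rfl
@[simp] lemma uH2_apply (x : H) : Hh.uH2 x = Hh.counit x • (Hh.one ⊗ₜ[k] Hh.one) := rfl

lemma ai_one : Hh.aut.symm Hh.one = Hh.one := by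
  conv_lhs => rw [← Hh.aut_one]
  exact Hh.aut.symm_apply_apply _

lemma ai_al : Hh.ai ∘ₗ Hh.al = LinearMap.id := by ext x; simp
lemma al_ai : Hh.al ∘ₗ Hh.ai = LinearMap.id := by ext x; simp

lemma comul_al : Hh.comul ∘ₗ Hh.al = (TensorProduct.map Hh.al Hh.al) ∘ₗ Hh.comul := by
  ext x; exact Hh.comul_aut x

lemma comul_ai : Hh.comul ∘ₗ Hh.ai = (TensorProduct.map Hh.ai Hh.ai) ∘ₗ Hh.comul := by
  ext x
  simp only [LinearMap.comp_apply]
  have := Hh.comul_aut (Hh.aut.symm x)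
  rw [Hh.aut.apply_symm_apply] at this
  rw [this, map_map_opaque, ai_al]
  simp [TensorProduct.map_id]

lemma antipode_al : Hh.antipode ∘ₗ Hh.al = Hh.al ∘ₗ Hh.antipode := by
  ext x; exact Hh.antipode_aut x

lemma antipode_ai : Hh.antipode ∘ₗ Hh.ai = Hh.ai ∘ₗ Hh.antipode := by
  ext x
  simp only [LinearMap.comp_apply]
  have := Hh.antipode_aut (Hh.aut.symm x)
  rw [Hh.aut.apply_symm_apply] at this
  rw [this]; simp

lemma counit_al : Hh.counit ∘ₗ Hh.al = Hh.counit := by ext x; exact Hh.counit_aut x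

lemma counit_ai : Hh.counit ∘ₗ Hh.ai = Hh.counit := by
  ext x
  simp only [LinearMap.comp_apply, LinearEquiv.coe_coe]
  have h := Hh.counit_aut (Hh.aut.symm x)
  rw [Hh.aut.apply_symm_apply] at h
  exact h.symm

/-- the Hom-coassociativity as an equality of linear maps. -/
lemma c1 : (TensorProduct.map Hh.ai Hh.comul) ∘ₗ Hh.comul
    = (TensorProduct.assoc k H H H).toLinearMap ∘ₗ (TensorProduct.map Hh.comul Hh.al) ∘ₗ Hh.comul := by
  ext x; exact Hh.hom_coassoc x

lemma c1b : (TensorProduct.map Hh.comul LinearMap.id) ∘ₗ Hh.comul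
    = (TensorProduct.map LinearMap.id Hh.ai) ∘ₗ (TensorProduct.assoc k H H H).symm.toLinearMap
        ∘ₗ (TensorProduct.map Hh.ai Hh.comul) ∘ₗ Hh.comul := by
  rw [c1]
  ext x
  simp only [LinearMap.comp_apply, LinearEquiv.coe_coe]
  rw [LinearEquiv.symm_apply_apply, map_map_opaque, Hh.ai_al, LinearMap.id_comp]

lemma c1c : (TensorProduct.map LinearMap.id Hh.comul) ∘ₗ Hh.comul
    = (TensorProduct.map Hh.al LinearMap.id) ∘ₗ (TensorProduct.assoc k H H H).toLinearMap
        ∘ₗ (TensorProduct.map Hh.comul Hh.al) ∘ₗ Hh.comul := by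
  rw [← c1]
  ext x
  simp only [LinearMap.comp_apply]
  rw [map_map_opaque, Hh.al_ai, LinearMap.id_comp]

lemma c2l : (TensorProduct.lid k H).toLinearMap ∘ₗ (TensorProduct.map Hh.counit LinearMap.id) ∘ₗ Hh.comul
    = Hh.ai := by ext x; exact Hh.counit_comul_left x

lemma c2r : (TensorProduct.rid k H).toLinearMap ∘ₗ (TensorProduct.map LinearMap.id Hh.counit) ∘ₗ Hh.comul
    = Hh.ai := by ext x; exact Hh.counit_comul_right x

lemma c3l : (TensorProduct.lift Hh.mul) ∘ₗ (TensorProduct.map Hh.antipode LinearMap.id) ∘ₗ Hh.comul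
    = Hh.uH1 := by ext x; exact Hh.antipode_convolution x

lemma c3r : (TensorProduct.lift Hh.mul) ∘ₗ (TensorProduct.map LinearMap.id Hh.antipode) ∘ₗ Hh.comul
    = Hh.uH1 := by ext x; exact Hh.convolution_antipode x

lemma mul_ai (a b : H) : Hh.mul (Hh.aut.symm a) (Hh.aut.symm b) = Hh.aut.symm (Hh.mul a b) := by
  apply Hh.aut.injective
  rw [Hh.aut_mul, Hh.aut.apply_symm_apply, Hh.aut.apply_symm_apply, Hh.aut.apply_symm_apply]

lemma mul_one_l : Hh.mul Hh.one = Hh.al := by ext x; exact Hh.one_mul x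

lemma S2_al : Hh.S2 ∘ₗ Hh.al = Hh.al ∘ₗ Hh.S2 := by
  ext y
  simp only [S2, LinearMap.comp_apply, LinearEquiv.coe_coe]
  rw [Hh.antipode_aut, Hh.aut.symm_apply_apply, Hh.aut.apply_symm_apply]

lemma Fmap_al : Hh.Fmap ∘ₗ Hh.al = (TensorProduct.map Hh.al Hh.al) ∘ₗ Hh.Fmap := by
  ext x
  simp only [Fmap, LinearMap.comp_apply, LinearEquiv.coe_coe]
  rw [Hh.antipode_aut, Hh.comul_aut]

lemma Kmap_al : Hh.Kmap ∘ₗ Hh.al = (TensorProduct.map Hh.al Hh.al) ∘ₗ Hh.Kmap := by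
  ext x
  simp only [Kmap, LinearMap.comp_apply, LinearEquiv.coe_coe]
  rw [Hh.comul_aut, comm_map_opaque, map_map_opaque, map_map_opaque, S2_al]
  congr 2
  ext y; simp only [LinearMap.comp_apply, LinearEquiv.coe_coe]
  rw [Hh.antipode_aut]

lemma Kmap_ai : Hh.Kmap ∘ₗ Hh.ai = (TensorProduct.map Hh.ai Hh.ai) ∘ₗ Hh.Kmap := by
  ext x
  simp only [LinearMap.comp_apply, LinearEquiv.coe_coe]
  have h := LinearMap.congr_fun Hh.Kmap_al (Hh.aut.symm x)
  simp only [LinearMap.comp_apply, LinearEquiv.coe_coe, Hh.aut.apply_symm_apply] at h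
  rw [h, map_map_opaque, Hh.ai_al]
  simp [TensorProduct.map_id]

lemma homassoc2 (P Q R : H ⊗[k] H) :
    Hh.M2 (Hh.M2 (P ⊗ₜ[k] Q) ⊗ₜ[k] (TensorProduct.map Hh.al Hh.al R))
      = Hh.M2 ((TensorProduct.map Hh.al Hh.al P) ⊗ₜ[k] Hh.M2 (Q ⊗ₜ[k] R)) := by
  induction P using TensorProduct.induction_on with
  | zero => simp
  | add x y hx hy => simp only [add_tmul, map_add, hx, hy]
  | tmul a b =>
    induction Q using TensorProduct.induction_on with
    | zero => simp
    | add x y hx hy => simp only [add_tmul, tmul_add, map_add, hx, hy]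
    | tmul c d =>
      induction R using TensorProduct.induction_on with
      | zero => simp
      | add x y hx hy => simp only [tmul_add, map_add, hx, hy]
      | tmul e f =>
        simp only [M2_tmul, TensorProduct.map_tmul, LinearEquiv.coe_coe]
        rw [← Hh.hom_assoc, ← Hh.hom_assoc]

lemma conv_assoc (f g h : H →ₗ[k] H ⊗[k] H)
    (hf : ∀ x, f (Hh.aut x) = TensorProduct.map Hh.al Hh.al (f x))
    (hh : ∀ x, h (Hh.aut x) = TensorProduct.map Hh.al Hh.al (h x)) :
    Hh.conv (Hh.conv f g) (h ∘ₗ Hh.al ∘ₗ Hh.al) = Hh.conv f (Hh.conv g h) := by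
  have key : ∀ s : H ⊗[k] (H ⊗[k] H),
      Hh.M2 ((TensorProduct.map (Hh.M2 ∘ₗ (TensorProduct.map f g)) (h ∘ₗ Hh.al))
        ((TensorProduct.assoc k H H H).symm s))
      = Hh.M2 ((TensorProduct.map (f ∘ₗ Hh.al) (Hh.M2 ∘ₗ (TensorProduct.map g h))) s) := by
    intro s
    induction s using TensorProduct.induction_on with
    | zero => simp
    | add x y hx hy => simp only [map_add, hx, hy]
    | tmul a q =>
      induction q using TensorProduct.induction_on with
      | zero => simp
      | add x y hx hy => simp only [tmul_add, map_add, hx, hy]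
      | tmul b c =>
        simp only [TensorProduct.assoc_symm_tmul, TensorProduct.map_tmul,
          LinearMap.comp_apply, LinearEquiv.coe_coe]
        rw [hh c, hf a]
        exact Hh.homassoc2 (f a) (g b) (h c)
  ext x
  show Hh.M2 ((TensorProduct.map (Hh.conv f g) (h ∘ₗ Hh.al ∘ₗ Hh.al)) (Hh.comul x))
    = Hh.M2 ((TensorProduct.map f (Hh.conv g h)) (Hh.comul x))
  set t0 := (TensorProduct.map Hh.ai Hh.comul) (Hh.comul x) with ht0
  -- LHS
  have lhs1 : (TensorProduct.map (Hh.conv f g) (h ∘ₗ Hh.al ∘ₗ Hh.al)) (Hh.comul x)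
      = (TensorProduct.map (Hh.M2 ∘ₗ TensorProduct.map f g) (h ∘ₗ Hh.al ∘ₗ Hh.al))
          ((TensorProduct.map Hh.comul LinearMap.id) (Hh.comul x)) := by
    rw [map_map_opaque]; rfl
  have lhs2 : (TensorProduct.map Hh.comul LinearMap.id) (Hh.comul x)
      = (TensorProduct.map LinearMap.id Hh.ai)
          ((TensorProduct.assoc k H H H).symm t0) := by
    have := LinearMap.congr_fun Hh.c1b x
    simpa only [LinearMap.comp_apply, LinearEquiv.coe_coe] using this
  have lhs3 : (TensorProduct.map (Hh.M2 ∘ₗ TensorProduct.map f g) (h ∘ₗ Hh.al ∘ₗ Hh.al))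
        ((TensorProduct.map LinearMap.id Hh.ai) ((TensorProduct.assoc k H H H).symm t0))
      = (TensorProduct.map (Hh.M2 ∘ₗ TensorProduct.map f g) (h ∘ₗ Hh.al))
          ((TensorProduct.assoc k H H H).symm t0) := by
    have e2 : (h ∘ₗ Hh.al ∘ₗ Hh.al) ∘ₗ Hh.ai = h ∘ₗ Hh.al := by
      ext y
      simp only [LinearMap.comp_apply, LinearEquiv.coe_coe, Hh.aut.apply_symm_apply]
    rw [map_map_opaque, e2, LinearMap.comp_id]
  -- RHS
  have rhs1 : (TensorProduct.map f (Hh.conv g h)) (Hh.comul x)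
      = (TensorProduct.map f (Hh.M2 ∘ₗ TensorProduct.map g h))
          ((TensorProduct.map LinearMap.id Hh.comul) (Hh.comul x)) := by
    rw [map_map_opaque]; rfl
  have rhs2 : (TensorProduct.map LinearMap.id Hh.comul) (Hh.comul x)
      = (TensorProduct.map Hh.al LinearMap.id) t0 := by
    have h1 := LinearMap.congr_fun Hh.c1c x
    have h2 := Hh.hom_coassoc x
    simp only [LinearMap.comp_apply, LinearEquiv.coe_coe] at h1
    rw [h1, ← h2]
  have rhs3 : (TensorProduct.map f (Hh.M2 ∘ₗ TensorProduct.map g h))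
        ((TensorProduct.map Hh.al LinearMap.id) t0)
      = (TensorProduct.map (f ∘ₗ Hh.al) (Hh.M2 ∘ₗ TensorProduct.map g h)) t0 := by
    rw [map_map_opaque, LinearMap.comp_id]
  rw [lhs1, lhs2, lhs3, rhs1, rhs2, rhs3]
  exact key t0


lemma M2_mapcomul (t : H ⊗[k] H) :
    Hh.M2 ((TensorProduct.map Hh.comul Hh.comul) t) = Hh.comul ((TensorProduct.lift Hh.mul) t) := by
  induction t using TensorProduct.induction_on with
  | zero => simp
  | add x y hx hy => simp only [map_add, hx, hy]
  | tmul a b =>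
    simp only [TensorProduct.map_tmul, TensorProduct.lift.tmul, M2]
    rw [Hh.comul_mul]

lemma U2 : Hh.conv Hh.comul Hh.Fmap = Hh.uH2 := by
  ext x
  show Hh.M2 ((TensorProduct.map Hh.comul Hh.Fmap) (Hh.comul x)) = _
  have h1 : (TensorProduct.map Hh.comul Hh.Fmap) (Hh.comul x)
      = (TensorProduct.map Hh.comul Hh.comul)
          ((TensorProduct.map LinearMap.id Hh.antipode) (Hh.comul x)) := by
    rw [map_map_opaque, LinearMap.comp_id]; rfl
  rw [h1, M2_mapcomul]
  have h2 := LinearMap.congr_fun Hh.c3r x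
  simp only [LinearMap.comp_apply] at h2
  rw [h2]
  simp [Hh.comul_one]

lemma E_eq (u : H) :
    (TensorProduct.lift Hh.mul) ((TensorProduct.map (Hh.ai ∘ₗ Hh.antipode) Hh.ai) (Hh.comul u))
      = Hh.counit u • Hh.one := by
  have key : ∀ t : H ⊗[k] H,
      (TensorProduct.lift Hh.mul) ((TensorProduct.map (Hh.ai ∘ₗ Hh.antipode) Hh.ai) t)
        = Hh.aut.symm ((TensorProduct.lift Hh.mul) ((TensorProduct.map Hh.antipode LinearMap.id) t)) := by
    intro t
    induction t using TensorProduct.induction_on with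
    | zero => simp
    | add x y hx hy => simp only [map_add, hx, hy]
    | tmul a b =>
      simp only [TensorProduct.map_tmul, TensorProduct.lift.tmul, LinearMap.comp_apply,
        LinearMap.id_coe, id_eq, LinearEquiv.coe_coe]
      rw [mul_ai]
  rw [key]
  have h := LinearMap.congr_fun Hh.c3l u
  simp only [LinearMap.comp_apply] at h
  rw [h]
  simp only [uH1_apply, map_smul, ai_one]

lemma U1 : Hh.conv Hh.Kmap Hh.comul = Hh.uH2 := by
  have hshuffK : Hh.Kmap = ((TensorProduct.map Hh.S2 Hh.antipode)
      ∘ₗ (TensorProduct.comm k H H).toLinearMap) ∘ₗ Hh.comul := by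
    rw [Kmap, LinearMap.comp_assoc]
  set shuff : H ⊗[k] H →ₗ[k] H ⊗[k] H :=
    (TensorProduct.map Hh.S2 Hh.antipode) ∘ₗ (TensorProduct.comm k H H).toLinearMap with hshuff
  set W2 : H ⊗[k] (H ⊗[k] (H ⊗[k] H)) →ₗ[k] H ⊗[k] H :=
    Hh.M2 ∘ₗ (TensorProduct.map shuff (TensorProduct.map Hh.ai Hh.ai))
      ∘ₗ (TensorProduct.assoc k H H (H ⊗[k] H)).symm.toLinearMap with hW2
  set V : H →ₗ[k] H ⊗[k] (H ⊗[k] H) :=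
    (TensorProduct.map Hh.al LinearMap.id) ∘ₗ (TensorProduct.assoc k H H H).toLinearMap
      ∘ₗ (TensorProduct.map Hh.comul Hh.al) ∘ₗ Hh.comul with hV
  -- the inner collapse
  have helperM : ∀ (j1 j2 : H →ₗ[k] H) (c v : H) (r : H ⊗[k] H),
      Hh.M2 ((TensorProduct.map (((TensorProduct.mk k H H).flip c) ∘ₗ j1)
        (((TensorProduct.mk k H H).flip v) ∘ₗ j2)) r)
      = ((TensorProduct.lift Hh.mul) ((TensorProduct.map j1 j2) r)) ⊗ₜ[k] (Hh.mul c v) := by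
    intro j1 j2 c v r
    induction r using TensorProduct.induction_on with
    | zero => simp
    | add x y hx hy => simp only [map_add, hx, hy, add_tmul]
    | tmul p q =>
      simp only [TensorProduct.map_tmul, LinearMap.comp_apply, TensorProduct.lift.tmul,
        LinearMap.flip_apply, TensorProduct.mk_apply, M2_tmul]
  have sub : ∀ (a : H) (q : H ⊗[k] H),
      W2 (a ⊗ₜ[k] ((TensorProduct.map Hh.al LinearMap.id)
          ((TensorProduct.assoc k H H H) ((TensorProduct.map Hh.comul Hh.al) q))))
      = (TensorProduct.map Hh.uH1 (Hh.mul (Hh.antipode a))) q := by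
    intro a q
    induction q using TensorProduct.induction_on with
    | zero => simp
    | add x y hx hy => simp only [map_add, hx, hy, TensorProduct.tmul_add]
    | tmul u v =>
      have hJ1 : (shuff ∘ₗ ((TensorProduct.mk k H H) a)) ∘ₗ Hh.al
          = ((TensorProduct.mk k H H).flip (Hh.antipode a)) ∘ₗ (Hh.ai ∘ₗ Hh.antipode) := by
        ext w
        simp only [hshuff, LinearMap.comp_apply, LinearEquiv.coe_coe, TensorProduct.mk_apply,
          TensorProduct.comm_tmul, TensorProduct.map_tmul, LinearMap.flip_apply, S2]
        rw [Hh.antipode_aut, Hh.aut.symm_apply_apply]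
      have hJ2 : (TensorProduct.map Hh.ai Hh.ai) ∘ₗ ((TensorProduct.mk k H H).flip (Hh.aut v))
          = ((TensorProduct.mk k H H).flip v) ∘ₗ Hh.ai := by
        ext w
        simp only [LinearMap.comp_apply, LinearEquiv.coe_coe, TensorProduct.mk_apply,
          LinearMap.flip_apply, TensorProduct.map_tmul, Hh.aut.symm_apply_apply]
      -- compute the LHS step by step
      simp only [TensorProduct.map_tmul, LinearMap.id_coe, id_eq, LinearEquiv.coe_coe]
      rw [assoc_tmul_opaque, map_map_opaque, LinearMap.comp_id]
      rw [hW2]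
      simp only [LinearMap.comp_apply, LinearEquiv.coe_coe]
      rw [assoc_symm_tmul_opaque, map_map_opaque, map_map_opaque]
      simp only [LinearMap.comp_id, LinearMap.id_comp]
      rw [hJ1, hJ2, helperM, E_eq]
      simp only [TensorProduct.map_tmul, uH1_apply]
  have helperY : ∀ (c : H) (w : (k ⊗[k] H)),
      (TensorProduct.map (LinearMap.toSpanSingleton k H Hh.one) (Hh.mul c)) w
        = Hh.one ⊗ₜ[k] (Hh.mul c ((TensorProduct.lid k H) w)) := by
    intro c w
    induction w using TensorProduct.induction_on with
    | zero => simp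
    | add x y hx hy => simp only [map_add, hx, hy, TensorProduct.tmul_add]
    | tmul r y =>
      simp only [TensorProduct.map_tmul, LinearMap.toSpanSingleton_apply,
        TensorProduct.lid_tmul, map_smul, LinearMap.smul_apply]
      rw [TensorProduct.smul_tmul]
  have helperX : ∀ t : H ⊗[k] H,
      W2 ((TensorProduct.map LinearMap.id V) t)
        = Hh.one ⊗ₜ[k] ((TensorProduct.lift Hh.mul)
            ((TensorProduct.map Hh.antipode Hh.ai) t)) := by
    intro t
    induction t using TensorProduct.induction_on with
    | zero => simp
    | add x y hx hy => simp only [map_add, hx, hy, TensorProduct.tmul_add]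
    | tmul a z =>
      simp only [TensorProduct.map_tmul, LinearMap.id_coe, id_eq, hV,
        LinearMap.comp_apply, LinearEquiv.coe_coe]
      rw [sub a (Hh.comul z)]
      have fuse : (TensorProduct.map Hh.uH1 (Hh.mul (Hh.antipode a))) (Hh.comul z)
          = (TensorProduct.map (LinearMap.toSpanSingleton k H Hh.one) (Hh.mul (Hh.antipode a)))
              ((TensorProduct.map Hh.counit LinearMap.id) (Hh.comul z)) := by
        rw [map_map_opaque, LinearMap.comp_id]; rfl
      rw [fuse, helperY]
      have hc2 := LinearMap.congr_fun Hh.c2l z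
      simp only [LinearMap.comp_apply, LinearEquiv.coe_coe] at hc2
      rw [hc2]
      simp [TensorProduct.lift.tmul]
  -- main chain
  ext x
  show Hh.M2 ((TensorProduct.map Hh.Kmap Hh.comul) (Hh.comul x)) = Hh.uH2 x
  set t0 := (TensorProduct.map Hh.ai Hh.comul) (Hh.comul x) with ht0
  have s1 : (TensorProduct.map Hh.Kmap Hh.comul) (Hh.comul x)
      = (TensorProduct.map shuff ((TensorProduct.map Hh.ai Hh.ai) ∘ₗ Hh.comul))
          ((TensorProduct.assoc k H H H).symm t0) := by
    have e1 : (TensorProduct.map Hh.comul LinearMap.id) (Hh.comul x)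
        = (TensorProduct.map LinearMap.id Hh.ai) ((TensorProduct.assoc k H H H).symm t0) := by
      have := LinearMap.congr_fun Hh.c1b x
      simpa only [LinearMap.comp_apply, LinearEquiv.coe_coe] using this
    have e0 : (TensorProduct.map Hh.Kmap Hh.comul) (Hh.comul x)
        = (TensorProduct.map shuff Hh.comul)
            ((TensorProduct.map Hh.comul LinearMap.id) (Hh.comul x)) := by
      rw [map_map_opaque, LinearMap.comp_id, ← hshuffK]
    rw [e0, e1, map_map_opaque, LinearMap.comp_id, comul_ai]
  have helperW : ∀ w : H ⊗[k] (H ⊗[k] H),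
      Hh.M2 ((TensorProduct.map shuff ((TensorProduct.map Hh.ai Hh.ai) ∘ₗ Hh.comul))
          ((TensorProduct.assoc k H H H).symm w))
      = W2 ((TensorProduct.map LinearMap.id (TensorProduct.map LinearMap.id Hh.comul)) w) := by
    intro w
    induction w using TensorProduct.induction_on with
    | zero => simp
    | add x y hx hy => simp only [map_add, hx, hy]
    | tmul a q =>
      rw [assoc_symm_tmul_opaque, map_map_opaque]
      rw [hW2]
      simp only [TensorProduct.map_tmul, LinearMap.id_coe, id_eq,
        LinearMap.comp_apply, LinearEquiv.coe_coe]
      rw [assoc_symm_tmul_opaque, map_map_opaque, map_map_opaque]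
      simp only [LinearMap.comp_id, LinearMap.id_comp]
  rw [s1, helperW t0]
  have s3 : (TensorProduct.map LinearMap.id (TensorProduct.map LinearMap.id Hh.comul)) t0
      = (TensorProduct.map LinearMap.id V)
          ((TensorProduct.map Hh.ai LinearMap.id) (Hh.comul x)) := by
    rw [ht0, map_map_opaque, map_map_opaque, hV]
    simp only [LinearMap.comp_id, LinearMap.id_comp]
    rw [c1c]
  rw [s3, helperX]
  have s6 : (TensorProduct.map Hh.antipode Hh.ai)
        ((TensorProduct.map Hh.ai LinearMap.id) (Hh.comul x))
      = (TensorProduct.map Hh.antipode LinearMap.id)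
          ((TensorProduct.map Hh.ai Hh.ai) (Hh.comul x)) := by
    rw [map_map_opaque, map_map_opaque, LinearMap.comp_id, LinearMap.id_comp]
  have s7 : (TensorProduct.map Hh.ai Hh.ai) (Hh.comul x) = Hh.comul (Hh.aut.symm x) := by
    have := LinearMap.congr_fun Hh.comul_ai x
    simp only [LinearMap.comp_apply, LinearEquiv.coe_coe] at this
    exact this.symm
  rw [s6, s7]
  have s8 := LinearMap.congr_fun Hh.c3l (Hh.aut.symm x)
  simp only [LinearMap.comp_apply] at s8
  rw [s8]
  have s9 := LinearMap.congr_fun Hh.counit_ai x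
  simp only [LinearMap.comp_apply, LinearEquiv.coe_coe] at s9
  simp only [uH1_apply, uH2_apply, s9, TensorProduct.tmul_smul]

lemma conv_uH2_left (g : H →ₗ[k] H ⊗[k] H) :
    Hh.conv Hh.uH2 g = (TensorProduct.map Hh.al Hh.al) ∘ₗ g ∘ₗ Hh.ai := by
  have helperL : ∀ t : H ⊗[k] H,
      Hh.M2 ((TensorProduct.map Hh.uH2 g) t)
        = (TensorProduct.map Hh.al Hh.al)
            (g ((TensorProduct.lid k H) ((TensorProduct.map Hh.counit LinearMap.id) t))) := by
    intro t
    induction t using TensorProduct.induction_on with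
    | zero => simp
    | add x y hx hy => simp only [map_add, hx, hy]
    | tmul a b =>
      simp only [TensorProduct.map_tmul, uH2_apply, LinearMap.id_coe, id_eq,
        TensorProduct.lid_tmul, map_smul]
      rw [← TensorProduct.smul_tmul', map_smul, M2_tmul_opaque, mul_one_l]
  ext x
  show Hh.M2 ((TensorProduct.map Hh.uH2 g) (Hh.comul x)) = _
  rw [helperL]
  have hc2 := LinearMap.congr_fun Hh.c2l x
  simp only [LinearMap.comp_apply, LinearEquiv.coe_coe] at hc2 ⊢
  rw [hc2]

lemma M2_one_right (q : H ⊗[k] H) :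
    Hh.M2 (q ⊗ₜ[k] (Hh.one ⊗ₜ[k] Hh.one)) = (TensorProduct.map Hh.al Hh.al) q := by
  induction q using TensorProduct.induction_on with
  | zero => simp
  | add x y hx hy => simp only [add_tmul, map_add, hx, hy]
  | tmul a b => simp only [M2_tmul, TensorProduct.map_tmul, Hh.mul_one]; rfl

lemma conv_uH2_right (g : H →ₗ[k] H ⊗[k] H) :
    Hh.conv g Hh.uH2 = (TensorProduct.map Hh.al Hh.al) ∘ₗ g ∘ₗ Hh.ai := by
  have helperR : ∀ t : H ⊗[k] H,
      Hh.M2 ((TensorProduct.map g Hh.uH2) t)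
        = (TensorProduct.map Hh.al Hh.al)
            (g ((TensorProduct.rid k H) ((TensorProduct.map LinearMap.id Hh.counit) t))) := by
    intro t
    induction t using TensorProduct.induction_on with
    | zero => simp
    | add x y hx hy => simp only [map_add, hx, hy]
    | tmul a b =>
      simp only [TensorProduct.map_tmul, uH2_apply, LinearMap.id_coe, id_eq,
        TensorProduct.rid_tmul, map_smul, TensorProduct.tmul_smul]
      rw [M2_one_right]
  ext x
  show Hh.M2 ((TensorProduct.map g Hh.uH2) (Hh.comul x)) = _
  rw [helperR]
  have hc2 := LinearMap.congr_fun Hh.c2r x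
  simp only [LinearMap.comp_apply, LinearEquiv.coe_coe] at hc2 ⊢
  rw [hc2]

lemma L_K : Hh.Kmap
    = (TensorProduct.map Hh.al Hh.al) ∘ₗ (TensorProduct.map Hh.al Hh.al) ∘ₗ Hh.Fmap := by
  have h := Hh.conv_assoc Hh.Kmap Hh.comul Hh.Fmap
    (fun x => by
      have := LinearMap.congr_fun Hh.Kmap_al x
      simpa only [LinearMap.comp_apply, LinearEquiv.coe_coe] using this)
    (fun x => by
      have := LinearMap.congr_fun Hh.Fmap_al x
      simpa only [LinearMap.comp_apply, LinearEquiv.coe_coe] using this)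
  rw [U1, U2, conv_uH2_left, conv_uH2_right] at h
  ext x
  have hx := LinearMap.congr_fun h x
  simp only [LinearMap.comp_apply, LinearEquiv.coe_coe, LinearEquiv.apply_symm_apply] at hx
  have hF := LinearMap.congr_fun Hh.Fmap_al x
  simp only [LinearMap.comp_apply, LinearEquiv.coe_coe] at hF
  rw [hF] at hx
  have hK2 := LinearMap.congr_fun Hh.Kmap_ai x
  simp only [LinearMap.comp_apply, LinearEquiv.coe_coe] at hK2
  rw [hK2, map_map_opaque, map_map_opaque, Hh.al_ai] at hx
  simp only [TensorProduct.map_id, LinearMap.id_coe, id_eq] at hx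
  simp only [LinearMap.comp_apply]
  rw [map_map_opaque]
  exact hx.symm

lemma eps_S (x : H) : Hh.counit (Hh.antipode x) = Hh.counit x := by
  have helperE : ∀ t : H ⊗[k] H,
      Hh.counit ((TensorProduct.lift Hh.mul) t)
        = (TensorProduct.lid k k) ((TensorProduct.map Hh.counit Hh.counit) t) := by
    intro t
    induction t using TensorProduct.induction_on with
    | zero => simp
    | add x y hx hy => simp only [map_add, hx, hy]
    | tmul a b =>
      simp only [TensorProduct.lift.tmul, TensorProduct.map_tmul, TensorProduct.lid_tmul,
        smul_eq_mul]
      exact Hh.counit_mul a b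
  have helperE2 : ∀ (ψ : H →ₗ[k] k) (t : H ⊗[k] H),
      (TensorProduct.lid k k) ((TensorProduct.map ψ Hh.counit) t)
        = ψ ((TensorProduct.rid k H) ((TensorProduct.map LinearMap.id Hh.counit) t)) := by
    intro ψ t
    induction t using TensorProduct.induction_on with
    | zero => simp
    | add x y hx hy => simp only [map_add, hx, hy]
    | tmul a b =>
      simp only [TensorProduct.map_tmul, TensorProduct.lid_tmul, TensorProduct.rid_tmul,
        map_smul, LinearMap.id_coe, id_eq, smul_eq_mul]
      rw [mul_comm]
  have h := LinearMap.congr_fun Hh.c3l x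
  simp only [LinearMap.comp_apply] at h
  have h2 := congrArg Hh.counit h
  rw [helperE] at h2
  have fuse : (TensorProduct.map Hh.counit Hh.counit)
        ((TensorProduct.map Hh.antipode LinearMap.id) (Hh.comul x))
      = (TensorProduct.map (Hh.counit ∘ₗ Hh.antipode) Hh.counit) (Hh.comul x) := by
    rw [map_map_opaque, LinearMap.comp_id]
  rw [fuse, helperE2 (Hh.counit ∘ₗ Hh.antipode)] at h2
  have hc2 := LinearMap.congr_fun Hh.c2r x
  simp only [LinearMap.comp_apply, LinearEquiv.coe_coe] at hc2
  rw [hc2] at h2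
  simp only [uH1_apply, map_smul, Hh.counit_one, smul_eq_mul, mul_one,
    LinearMap.comp_apply] at h2
  have hS := LinearMap.congr_fun Hh.antipode_ai x
  simp only [LinearMap.comp_apply, LinearEquiv.coe_coe] at hS
  rw [hS] at h2
  have hcai := LinearMap.congr_fun Hh.counit_ai (Hh.antipode x)
  simp only [LinearMap.comp_apply, LinearEquiv.coe_coe] at hcai
  rw [hcai] at h2
  exact h2

lemma eps_S2 : Hh.counit ∘ₗ Hh.S2 = Hh.counit := by
  ext y
  simp only [S2, LinearMap.comp_apply, LinearEquiv.coe_coe]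
  have h1 := LinearMap.congr_fun Hh.counit_ai (Hh.aut.symm (Hh.antipode y))
  simp only [LinearMap.comp_apply, LinearEquiv.coe_coe] at h1
  rw [h1]
  have h2 := LinearMap.congr_fun Hh.counit_ai (Hh.antipode y)
  simp only [LinearMap.comp_apply, LinearEquiv.coe_coe] at h2
  rw [h2, eps_S]

lemma helperF_lid (f : H →ₗ[k] H) (t : H ⊗[k] H) :
    (TensorProduct.lid k H) ((TensorProduct.map Hh.counit f) t)
      = f ((TensorProduct.lid k H) ((TensorProduct.map Hh.counit LinearMap.id) t)) := by
  induction t using TensorProduct.induction_on with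
  | zero => simp
  | add x y hx hy => simp only [map_add, hx, hy]
  | tmul a b =>
    simp only [TensorProduct.map_tmul, TensorProduct.lid_tmul, map_smul, LinearMap.id_coe, id_eq]

lemma S_al2 (x : H) : Hh.aut (Hh.aut (Hh.antipode x)) = Hh.antipode x := by
  have hK := LinearMap.congr_fun Hh.L_K x
  simp only [LinearMap.comp_apply] at hK
  have lhs : (TensorProduct.lid k H) ((TensorProduct.map Hh.counit LinearMap.id) (Hh.Kmap x))
      = Hh.aut.symm (Hh.antipode x) := by
    show (TensorProduct.lid k H) ((TensorProduct.map Hh.counit LinearMap.id)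
      ((TensorProduct.map Hh.S2 Hh.antipode) ((TensorProduct.comm k H H) (Hh.comul x)))) = _
    rw [map_map_opaque, LinearMap.id_comp, eps_S2]
    have helperG : ∀ t : H ⊗[k] H,
        (TensorProduct.lid k H) ((TensorProduct.map Hh.counit Hh.antipode)
            ((TensorProduct.comm k H H) t))
          = Hh.antipode ((TensorProduct.rid k H)
              ((TensorProduct.map LinearMap.id Hh.counit) t)) := by
      intro t
      induction t using TensorProduct.induction_on with
      | zero => simp
      | add x y hx hy => simp only [map_add, hx, hy]
      | tmul a b =>
        simp only [TensorProduct.comm_tmul, TensorProduct.map_tmul, TensorProduct.lid_tmul,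
          TensorProduct.rid_tmul, map_smul, LinearMap.id_coe, id_eq]
    rw [helperG]
    have hc2 := LinearMap.congr_fun Hh.c2r x
    simp only [LinearMap.comp_apply, LinearEquiv.coe_coe] at hc2
    rw [hc2]
    have hS := LinearMap.congr_fun Hh.antipode_ai x
    simp only [LinearMap.comp_apply, LinearEquiv.coe_coe] at hS
    exact hS
  have rhs : (TensorProduct.lid k H) ((TensorProduct.map Hh.counit LinearMap.id)
        ((TensorProduct.map Hh.al Hh.al) ((TensorProduct.map Hh.al Hh.al) (Hh.Fmap x))))
      = Hh.aut (Hh.antipode x) := by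
    rw [map_map_opaque, map_map_opaque, LinearMap.id_comp]
    have ce : (Hh.counit ∘ₗ Hh.al) ∘ₗ Hh.al = Hh.counit := by
      ext y
      simp only [LinearMap.comp_apply, LinearEquiv.coe_coe]
      rw [Hh.counit_aut, Hh.counit_aut]
    rw [ce, helperF_lid]
    have hc2 := LinearMap.congr_fun Hh.c2l (Hh.antipode x)
    simp only [LinearMap.comp_apply, LinearEquiv.coe_coe] at hc2
    rw [show (TensorProduct.lid k H) ((TensorProduct.map Hh.counit LinearMap.id)
        (Hh.Fmap x)) = Hh.aut.symm (Hh.antipode x) from hc2]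
    simp only [LinearMap.comp_apply, LinearEquiv.coe_coe, Hh.aut.apply_symm_apply]
  have key := congrArg (fun t => (TensorProduct.lid k H)
    ((TensorProduct.map Hh.counit LinearMap.id) t)) hK
  rw [lhs, rhs] at key
  have key2 := congrArg Hh.aut key
  rw [Hh.aut.apply_symm_apply] at key2
  exact key2.symm

lemma F_eq_K : Hh.Fmap = Hh.Kmap := by
  rw [L_K]
  ext x
  simp only [LinearMap.comp_apply]
  rw [map_map_opaque]
  have h1 : (TensorProduct.map (Hh.al ∘ₗ Hh.al) (Hh.al ∘ₗ Hh.al)) (Hh.Fmap x)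
      = Hh.comul (Hh.aut (Hh.aut (Hh.antipode x))) := by
    rw [Hh.comul_aut, Hh.comul_aut, map_map_opaque]
    rfl
  rw [h1, S_al2]
  rfl

end HomHopfAlgebra

end HopfAux

noncomputable section MainAux
variable {k : Type v} [CommRing k] {H A : Type u}
  [AddCommGroup H] [Module k H] [AddCommGroup A] [Module k A]
variable (Hh : HomHopfAlgebra k H) (AA : HomComoduleAlgebra k Hh A) (Φ : TotalIntegral k Hh AA)

/-- componentwise product on `A ⊗ H`. -/
def N2 : (A ⊗[k] H) ⊗[k] (A ⊗[k] H) →ₗ[k] A ⊗[k] H :=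
  TensorProduct.lift (biTensor AA.mul Hh.mul)

@[simp] lemma N2_tmul (p c : A) (u v : H) :
    N2 Hh AA ((p ⊗ₜ[k] u) ⊗ₜ[k] (c ⊗ₜ[k] v)) = AA.mul p c ⊗ₜ[k] Hh.mul u v := by
  simp [N2, biTensor]

lemma coact_lift (t : A ⊗[k] A) :
    AA.coact (TensorProduct.lift AA.mul t)
      = N2 Hh AA ((TensorProduct.map AA.coact AA.coact) t) := by
  induction t using TensorProduct.induction_on with
  | zero => simp
  | add x y hx hy => simp only [map_add, hx, hy]
  | tmul a b =>
    simp only [TensorProduct.lift.tmul, TensorProduct.map_tmul, N2]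
    rw [AA.coact_mul]

lemma mulA_ai (a b : A) :
    AA.mul (AA.aut.symm a) (AA.aut.symm b) = AA.aut.symm (AA.mul a b) := by
  apply AA.aut.injective
  rw [AA.aut_mul, AA.aut.apply_symm_apply, AA.aut.apply_symm_apply, AA.aut.apply_symm_apply]

lemma phi_ai (h : H) : Φ.toFun (Hh.aut.symm h) = AA.aut.symm (Φ.toFun h) := by
  apply AA.aut.injective
  rw [AA.aut.apply_symm_apply, ← Φ.commutes, Hh.aut.apply_symm_apply]

lemma colinK : AA.coact ∘ₗ (Φ.toFun ∘ₗ Hh.antipode)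
    = (TensorProduct.map Φ.toFun LinearMap.id) ∘ₗ Hh.Kmap := by
  ext h
  simp only [LinearMap.comp_apply]
  rw [Φ.colinear]
  congr 1
  exact LinearMap.congr_fun Hh.F_eq_K h

/-- the map `z ↦ φ(S z₂) ⊗ αS(z₁)` as a composite (W2A). -/
def W2A : H ⊗[k] H →ₗ[k] A ⊗[k] H :=
  (TensorProduct.map (Φ.toFun ∘ₗ Hh.ai ∘ₗ Hh.antipode) (Hh.al ∘ₗ Hh.antipode))
    ∘ₗ (TensorProduct.comm k H H).toLinearMap

lemma mapPhiK : (TensorProduct.map Φ.toFun LinearMap.id) ∘ₗ Hh.Kmap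
    = (W2A Hh AA Φ ∘ₗ (TensorProduct.map Hh.ai Hh.ai)) ∘ₗ Hh.comul := by
  ext h
  simp only [LinearMap.comp_apply, HomHopfAlgebra.Kmap, LinearEquiv.coe_coe, W2A]
  rw [comm_map_opaque, map_map_opaque, map_map_opaque]
  have e1 : Φ.toFun ∘ₗ Hh.S2 = (Φ.toFun ∘ₗ Hh.ai ∘ₗ Hh.antipode) ∘ₗ Hh.ai := by
    ext w
    simp only [LinearMap.comp_apply, LinearEquiv.coe_coe, HomHopfAlgebra.S2]
    congr 1
    have hS := LinearMap.congr_fun Hh.antipode_ai w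
    simp only [LinearMap.comp_apply, LinearEquiv.coe_coe] at hS
    rw [hS]
  have e2 : LinearMap.id ∘ₗ Hh.antipode = (Hh.al ∘ₗ Hh.antipode) ∘ₗ Hh.ai := by
    ext w
    simp only [LinearMap.comp_apply, LinearEquiv.coe_coe, LinearMap.id_coe, id_eq]
    have hS := LinearMap.congr_fun Hh.antipode_ai w
    simp only [LinearMap.comp_apply, LinearEquiv.coe_coe] at hS
    rw [hS, Hh.aut.apply_symm_apply]
  rw [e1, e2]

lemma W2A_fuse : (W2A Hh AA Φ ∘ₗ (TensorProduct.map Hh.ai Hh.ai))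
      ∘ₗ (TensorProduct.map Hh.al Hh.al)
    = W2A Hh AA Φ := by
  ext u v
  simp [W2A]

lemma EA (u : H) :
    (TensorProduct.lift Hh.mul)
        ((TensorProduct.map Hh.al (Hh.al ∘ₗ Hh.antipode)) (Hh.comul u))
      = Hh.counit u • Hh.one := by
  have key : ∀ t : H ⊗[k] H,
      (TensorProduct.lift Hh.mul) ((TensorProduct.map Hh.al (Hh.al ∘ₗ Hh.antipode)) t)
        = Hh.aut ((TensorProduct.lift Hh.mul)
            ((TensorProduct.map LinearMap.id Hh.antipode) t)) := by
    intro t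
    induction t using TensorProduct.induction_on with
    | zero => simp
    | add x y hx hy => simp only [map_add, hx, hy]
    | tmul a b =>
      simp only [TensorProduct.map_tmul, TensorProduct.lift.tmul, LinearMap.comp_apply,
        LinearMap.id_coe, id_eq, LinearEquiv.coe_coe]
      rw [Hh.aut_mul]
  rw [key]
  have h := LinearMap.congr_fun Hh.c3r u
  simp only [LinearMap.comp_apply] at h
  rw [h]
  simp only [HomHopfAlgebra.uH1_apply, map_smul, Hh.aut_one]

lemma helperMA (j1 j2 : H →ₗ[k] H) (p c : A) (r : H ⊗[k] H) :
    N2 Hh AA ((TensorProduct.map ((TensorProduct.mk k A H p) ∘ₗ j1)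
        ((TensorProduct.mk k A H c) ∘ₗ j2)) r)
      = (AA.mul p c) ⊗ₜ[k] ((TensorProduct.lift Hh.mul) ((TensorProduct.map j1 j2) r)) := by
  induction r using TensorProduct.induction_on with
  | zero => simp
  | add x y hx hy => simp only [map_add, hx, hy, TensorProduct.tmul_add]
  | tmul a b =>
    simp only [TensorProduct.map_tmul, LinearMap.comp_apply, TensorProduct.mk_apply,
      TensorProduct.lift.tmul, N2_tmul]

lemma subA (p : A) (q : H ⊗[k] H) :
    N2 Hh AA ((TensorProduct.map LinearMap.id (W2A Hh AA Φ))
        ((TensorProduct.assoc k A H (H ⊗[k] H)).symm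
          (p ⊗ₜ[k] ((TensorProduct.map Hh.al LinearMap.id)
            ((TensorProduct.assoc k H H H) ((TensorProduct.map Hh.comul Hh.al) q))))))
      = (TensorProduct.map ((AA.mul p) ∘ₗ Φ.toFun ∘ₗ Hh.antipode) Hh.uH1)
          ((TensorProduct.comm k H H) q) := by
  induction q using TensorProduct.induction_on with
  | zero => simp
  | add x y hx hy => simp only [map_add, hx, hy, TensorProduct.tmul_add]
  | tmul u v =>
    have hJ2 : (W2A Hh AA Φ) ∘ₗ ((TensorProduct.mk k H H).flip (Hh.aut v))
        = ((TensorProduct.mk k A H) (Φ.toFun (Hh.antipode v))) ∘ₗ (Hh.al ∘ₗ Hh.antipode) := by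
      ext w
      simp only [W2A, LinearMap.comp_apply, LinearMap.flip_apply, TensorProduct.mk_apply,
        LinearEquiv.coe_coe, TensorProduct.comm_tmul, TensorProduct.map_tmul]
      rw [Hh.antipode_aut, Hh.aut.symm_apply_apply]
    simp only [TensorProduct.map_tmul, LinearMap.id_coe, id_eq, LinearEquiv.coe_coe]
    rw [assoc_tmul_opaque, map_map_opaque, LinearMap.comp_id]
    rw [assoc_symm_tmul_opaque, map_map_opaque, map_map_opaque]
    simp only [LinearMap.comp_id, LinearMap.id_comp]
    rw [hJ2, helperMA, EA]
    simp only [TensorProduct.comm_tmul, TensorProduct.map_tmul, LinearMap.comp_apply,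
      HomHopfAlgebra.uH1_apply]

lemma helperZ (g : H →ₗ[k] A) (w : H ⊗[k] k) :
    (TensorProduct.map g (LinearMap.toSpanSingleton k H Hh.one)) w
      = (g ((TensorProduct.rid k H) w)) ⊗ₜ[k] Hh.one := by
  induction w using TensorProduct.induction_on with
  | zero => simp
  | add x y hx hy => simp only [map_add, hx, hy, map_add, TensorProduct.add_tmul]
  | tmul y r =>
    simp only [TensorProduct.map_tmul, LinearMap.toSpanSingleton_apply,
      TensorProduct.rid_tmul, map_smul]
    rw [TensorProduct.tmul_smul, TensorProduct.smul_tmul']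

lemma helperComm (t : H ⊗[k] H) :
    (TensorProduct.rid k H) ((TensorProduct.map LinearMap.id Hh.counit)
        ((TensorProduct.comm k H H) t))
      = (TensorProduct.lid k H) ((TensorProduct.map Hh.counit LinearMap.id) t) := by
  induction t using TensorProduct.induction_on with
  | zero => simp
  | add x y hx hy => simp only [map_add, hx, hy]
  | tmul a b =>
    simp only [TensorProduct.comm_tmul, TensorProduct.map_tmul, TensorProduct.rid_tmul,
      TensorProduct.lid_tmul, LinearMap.id_coe, id_eq]

lemma helperXA (t : A ⊗[k] H) :
    N2 Hh AA ((TensorProduct.map LinearMap.id (W2A Hh AA Φ))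
        ((TensorProduct.assoc k A H (H ⊗[k] H)).symm
          ((TensorProduct.map LinearMap.id
            ((TensorProduct.map Hh.al LinearMap.id)
              ∘ₗ (TensorProduct.assoc k H H H).toLinearMap
              ∘ₗ (TensorProduct.map Hh.comul Hh.al) ∘ₗ Hh.comul)) t)))
      = ((TensorProduct.lift AA.mul)
          ((TensorProduct.map LinearMap.id (Φ.toFun ∘ₗ Hh.antipode ∘ₗ Hh.ai)) t))
        ⊗ₜ[k] Hh.one := by
  induction t using TensorProduct.induction_on with
  | zero => simp
  | add x y hx hy => simp only [map_add, hx, hy, TensorProduct.add_tmul]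
  | tmul p z =>
    simp only [TensorProduct.map_tmul, LinearMap.id_coe, id_eq, LinearMap.comp_apply,
      LinearEquiv.coe_coe]
    rw [subA Hh AA Φ p (Hh.comul z)]
    have fuse : (TensorProduct.map ((AA.mul p) ∘ₗ Φ.toFun ∘ₗ Hh.antipode) Hh.uH1)
          ((TensorProduct.comm k H H) (Hh.comul z))
        = (TensorProduct.map ((AA.mul p) ∘ₗ Φ.toFun ∘ₗ Hh.antipode)
            (LinearMap.toSpanSingleton k H Hh.one))
            ((TensorProduct.map LinearMap.id Hh.counit)
              ((TensorProduct.comm k H H) (Hh.comul z))) := by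
      rw [map_map_opaque, LinearMap.comp_id]; rfl
    rw [fuse, helperZ, helperComm]
    have hc2 := LinearMap.congr_fun Hh.c2l z
    simp only [LinearMap.comp_apply, LinearEquiv.coe_coe] at hc2
    rw [hc2]
    simp only [LinearMap.comp_apply, TensorProduct.lift.tmul]

/-- Main coinvariance statement. -/
lemma main_coinv (a : A) :
    AA.coact ((TensorProduct.lift AA.mul)
        ((TensorProduct.map LinearMap.id (Φ.toFun ∘ₗ Hh.antipode)) (AA.coact a)))
      = AA.aut.symm ((TensorProduct.lift AA.mul)
          ((TensorProduct.map LinearMap.id (Φ.toFun ∘ₗ Hh.antipode)) (AA.coact a)))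
        ⊗ₜ[k] Hh.one := by
  set V : H →ₗ[k] H ⊗[k] (H ⊗[k] H) :=
    (TensorProduct.map Hh.al LinearMap.id) ∘ₗ (TensorProduct.assoc k H H H).toLinearMap
      ∘ₗ (TensorProduct.map Hh.comul Hh.al) ∘ₗ Hh.comul with hV
  -- step 1: expand the coaction of the product
  rw [coact_lift]
  have s1 : (TensorProduct.map AA.coact AA.coact)
        ((TensorProduct.map LinearMap.id (Φ.toFun ∘ₗ Hh.antipode)) (AA.coact a))
      = (TensorProduct.map AA.coact ((W2A Hh AA Φ ∘ₗ (TensorProduct.map Hh.ai Hh.ai)) ∘ₗ Hh.comul))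
          (AA.coact a) := by
    rw [map_map_opaque, LinearMap.comp_id]
    congr 1
    rw [← mapPhiK, ← colinK]
  rw [s1]
  -- step 2: split off comul and use the comodule coassociativity
  have s2 : (TensorProduct.map AA.coact
        ((W2A Hh AA Φ ∘ₗ (TensorProduct.map Hh.ai Hh.ai)) ∘ₗ Hh.comul)) (AA.coact a)
      = (TensorProduct.map LinearMap.id (W2A Hh AA Φ))
          ((TensorProduct.map LinearMap.id (TensorProduct.map Hh.ai Hh.ai))
            ((TensorProduct.map AA.coact Hh.comul) (AA.coact a))) := by
    rw [map_map_opaque, map_map_opaque, LinearMap.id_comp, LinearMap.id_comp,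
      LinearMap.comp_assoc]
  rw [s2]
  -- step 3: comodule coassociativity
  have hca := AA.hom_coassoc a
  have s3 : (TensorProduct.map AA.coact Hh.comul) (AA.coact a)
      = (TensorProduct.map LinearMap.id ((TensorProduct.map Hh.al Hh.al) ∘ₗ Hh.comul))
          ((TensorProduct.assoc k A H H).symm
            ((TensorProduct.map AA.aut.symm.toLinearMap Hh.comul) (AA.coact a))) := by
    have h0 : (TensorProduct.map AA.coact Hh.aut.symm.toLinearMap) (AA.coact a)
        = (TensorProduct.assoc k A H H).symm
            ((TensorProduct.map AA.aut.symm.toLinearMap Hh.comul) (AA.coact a)) := by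
      have := congrArg (TensorProduct.assoc k A H H).symm hca
      rwa [LinearEquiv.symm_apply_apply] at this
    have h1 : (TensorProduct.map AA.coact Hh.comul) (AA.coact a)
        = (TensorProduct.map LinearMap.id (Hh.comul ∘ₗ Hh.al))
            ((TensorProduct.map AA.coact Hh.aut.symm.toLinearMap) (AA.coact a)) := by
      have e : (Hh.comul ∘ₗ Hh.al) ∘ₗ Hh.ai = Hh.comul := by
        ext w
        simp only [LinearMap.comp_apply, LinearEquiv.coe_coe, Hh.aut.apply_symm_apply]
      rw [map_map_opaque, LinearMap.id_comp, e]
    rw [h1, h0, Hh.comul_al]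
  rw [s3]
  -- step 4: fuse everything on the second slot and simplify the automorphisms
  set s0 := (TensorProduct.map AA.aut.symm.toLinearMap Hh.comul) (AA.coact a) with hs0
  have s4 : (TensorProduct.map LinearMap.id (W2A Hh AA Φ))
        ((TensorProduct.map LinearMap.id (TensorProduct.map Hh.ai Hh.ai))
          ((TensorProduct.map LinearMap.id ((TensorProduct.map Hh.al Hh.al) ∘ₗ Hh.comul))
            ((TensorProduct.assoc k A H H).symm s0)))
      = (TensorProduct.map LinearMap.id (W2A Hh AA Φ ∘ₗ Hh.comul))
          ((TensorProduct.assoc k A H H).symm s0) := by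
    have e4 : (W2A Hh AA Φ ∘ₗ TensorProduct.map Hh.ai Hh.ai)
          ∘ₗ ((TensorProduct.map Hh.al Hh.al) ∘ₗ Hh.comul)
        = W2A Hh AA Φ ∘ₗ Hh.comul := by
      ext w
      simp only [LinearMap.comp_apply, LinearEquiv.coe_coe]
      rw [map_map_opaque, Hh.ai_al]
      simp [TensorProduct.map_id]
    rw [map_map_opaque, map_map_opaque]
    simp only [LinearMap.id_comp]
    rw [e4]
  rw [s4]
  -- step 5: move the inner comul out (helperWA)
  have helperWA : ∀ s : A ⊗[k] (H ⊗[k] H),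
      N2 Hh AA ((TensorProduct.map LinearMap.id (W2A Hh AA Φ ∘ₗ Hh.comul))
          ((TensorProduct.assoc k A H H).symm s))
        = N2 Hh AA ((TensorProduct.map LinearMap.id (W2A Hh AA Φ))
            ((TensorProduct.assoc k A H (H ⊗[k] H)).symm
              ((TensorProduct.map LinearMap.id (TensorProduct.map LinearMap.id Hh.comul)) s))) := by
    intro s
    induction s using TensorProduct.induction_on with
    | zero => simp
    | add x y hx hy => simp only [map_add, hx, hy]
    | tmul p q =>
      rw [assoc_symm_tmul_opaque, map_map_opaque]
      simp only [TensorProduct.map_tmul, LinearMap.id_coe, id_eq]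
      rw [assoc_symm_tmul_opaque, map_map_opaque, map_map_opaque]
      simp only [LinearMap.comp_id, LinearMap.id_comp]
  rw [helperWA]
  -- step 6: H-side hom-coassociativity (c1c)
  have s6 : (TensorProduct.map LinearMap.id (TensorProduct.map LinearMap.id Hh.comul)) s0
      = (TensorProduct.map LinearMap.id
          ((TensorProduct.map Hh.al LinearMap.id)
            ∘ₗ (TensorProduct.assoc k H H H).toLinearMap
            ∘ₗ (TensorProduct.map Hh.comul Hh.al) ∘ₗ Hh.comul))
          ((TensorProduct.map AA.aut.symm.toLinearMap LinearMap.id) (AA.coact a)) := by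
    rw [hs0, map_map_opaque, map_map_opaque]
    simp only [LinearMap.comp_id, LinearMap.id_comp]
    rw [Hh.c1c]
  rw [s6, helperXA]
  -- step 7: final identification
  have s8 : (TensorProduct.map LinearMap.id (Φ.toFun ∘ₗ Hh.antipode ∘ₗ Hh.ai))
        ((TensorProduct.map AA.aut.symm.toLinearMap LinearMap.id) (AA.coact a))
      = (TensorProduct.map AA.aut.symm.toLinearMap (Φ.toFun ∘ₗ Hh.antipode ∘ₗ Hh.ai))
          (AA.coact a) := by
    rw [map_map_opaque]
    simp only [LinearMap.comp_id, LinearMap.id_comp]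
  rw [s8]
  congr 1
  -- remains: lift mul (map βi (φ∘S∘ai) (ρ a)) = βi (lift mul (map id (φ∘S) (ρ a)))
  have helperFinal : ∀ t : A ⊗[k] H,
      (TensorProduct.lift AA.mul)
          ((TensorProduct.map AA.aut.symm.toLinearMap (Φ.toFun ∘ₗ Hh.antipode ∘ₗ Hh.ai)) t)
        = AA.aut.symm ((TensorProduct.lift AA.mul)
            ((TensorProduct.map LinearMap.id (Φ.toFun ∘ₗ Hh.antipode)) t)) := by
    intro t
    induction t using TensorProduct.induction_on with
    | zero => simp
    | add x y hx hy => simp only [map_add, hx, hy]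
    | tmul p h =>
      simp only [TensorProduct.map_tmul, TensorProduct.lift.tmul, LinearMap.comp_apply,
        LinearMap.id_coe, id_eq, LinearEquiv.coe_coe]
      have hS := LinearMap.congr_fun Hh.antipode_ai h
      simp only [LinearMap.comp_apply, LinearEquiv.coe_coe] at hS
      rw [hS, phi_ai, mulA_ai]
  exact helperFinal (AA.coact a)

end MainAux

section AuxEasy

variable {k : Type v} [CommRing k] {H A : Type u}
  [AddCommGroup H] [Module k H] [AddCommGroup A] [Module k A]

lemma aut_symm_one_s9 (Hh : HomHopfAlgebra k H) : Hh.aut.symm Hh.one = Hh.one := by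
  conv_lhs => rw [← Hh.aut_one]
  exact Hh.aut.symm_apply_apply _

lemma antipode_one_s9 (Hh : HomHopfAlgebra k H) : Hh.antipode Hh.one = Hh.one := by
  have h := Hh.convolution_antipode Hh.one
  rw [Hh.comul_one] at h
  simp only [TensorProduct.map_tmul, TensorProduct.lift.tmul, LinearMap.id_coe, id_eq,
    Hh.counit_one, one_smul] at h
  rw [Hh.one_mul] at h
  have h2 := congrArg Hh.aut.symm h
  rw [Hh.aut.symm_apply_apply, aut_symm_one_s9] at h2
  exact h2

variable {Hh : HomHopfAlgebra k H}

lemma tau_beta_aux (AA : HomComoduleAlgebra k Hh A) (Φ : TotalIntegral k Hh AA)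
    (t : A ⊗[k] H) :
    TensorProduct.lift AA.mul (TensorProduct.map LinearMap.id (Φ.toFun.comp Hh.antipode)
      (TensorProduct.map AA.aut.toLinearMap Hh.aut.toLinearMap t))
    = AA.aut (TensorProduct.lift AA.mul (TensorProduct.map LinearMap.id
        (Φ.toFun.comp Hh.antipode) t)) := by
  induction t using TensorProduct.induction_on with
  | zero => simp
  | tmul p h =>
    simp only [TensorProduct.map_tmul, TensorProduct.lift.tmul, LinearMap.id_coe, id_eq,
      LinearMap.comp_apply, LinearEquiv.coe_coe]
    rw [Hh.antipode_aut, Φ.commutes, AA.aut_mul]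
  | add x y hx hy => simp only [map_add, hx, hy]

lemma tau_mulC_aux (AA : HomComoduleAlgebra k Hh A) (Φ : TotalIntegral k Hh AA)
    (c : A) (t : A ⊗[k] H) :
    TensorProduct.lift AA.mul (TensorProduct.map LinearMap.id (Φ.toFun.comp Hh.antipode)
      (biTensor AA.mul Hh.mul (AA.aut.symm c ⊗ₜ[k] Hh.one) t))
    = AA.mul c (TensorProduct.lift AA.mul (TensorProduct.map LinearMap.id
        (Φ.toFun.comp Hh.antipode) t)) := by
  induction t using TensorProduct.induction_on with
  | zero => simp
  | tmul p h =>
    simp only [biTensor, LinearMap.comp_apply, TensorProduct.map_tmul,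
      TensorProduct.homTensorHomMap_apply, TensorProduct.lift.tmul, LinearMap.id_coe, id_eq,
      LinearEquiv.coe_coe]
    rw [Hh.one_mul, Hh.antipode_aut, Φ.commutes, ← AA.hom_assoc, AA.aut.apply_symm_apply]
  | add x y hx hy => simp only [map_add, hx, hy]

end AuxEasy

section Statements

variable {k : Type v} [CommRing k] {H A : Type u}
  [AddCommGroup H] [Module k H] [AddCommGroup A] [Module k A]

/-- For a total integral `φ`, the map `τ_A(b) = b₍₀₎ φ(S(b₍₁₎))` is a
morphism of left `(C,β)`-Hom-modules `(A,β) → (C,β)` restricting to the identity on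
`C = {b : ρ_A(b) = β⁻¹(b) ⊗ 1_H}`; hence `(C,β)` is a direct summand of `(A,β)` as a
left `(C,β)`-Hom-module. -/
theorem traceA_left_C_linear_retraction
    (Hh : HomHopfAlgebra k H) (AA : HomComoduleAlgebra k Hh A)
    (Φ : TotalIntegral k Hh AA) :
    let C : Set A := {b | AA.coact b = AA.aut.symm b ⊗ₜ[k] Hh.one}
    let τ : A →ₗ[k] A := traceMap Hh.antipode Φ.toFun AA.mul AA.coact
    (∀ a : A, τ a ∈ C) ∧
    (∀ c ∈ C, ∀ a : A, τ (AA.mul c a) = AA.mul c (τ a)) ∧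
    (∀ a : A, τ (AA.aut a) = AA.aut (τ a)) ∧
    (∀ c ∈ C, τ c = c) := by
  intro C τ
  refine ⟨?_, ?_, ?_, ?_⟩
  · -- part 1
    intro a
    show AA.coact (TensorProduct.lift AA.mul (TensorProduct.map LinearMap.id
      (Φ.toFun.comp Hh.antipode) (AA.coact a))) = _
    exact main_coinv Hh AA Φ a
  · -- part 2
    intro c hc a
    show TensorProduct.lift AA.mul (TensorProduct.map LinearMap.id
      (Φ.toFun.comp Hh.antipode) (AA.coact (AA.mul c a))) = _
    rw [AA.coact_mul, hc, tau_mulC_aux]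
    rfl
  · -- part 3
    intro a
    show TensorProduct.lift AA.mul (TensorProduct.map LinearMap.id
      (Φ.toFun.comp Hh.antipode) (AA.coact (AA.aut a))) = _
    rw [AA.coact_aut, tau_beta_aux]
    rfl
  · -- part 4
    intro c hc
    show TensorProduct.lift AA.mul (TensorProduct.map LinearMap.id
      (Φ.toFun.comp Hh.antipode) (AA.coact c)) = c
    rw [hc]
    simp only [TensorProduct.map_tmul, TensorProduct.lift.tmul, LinearMap.id_coe, id_eq,
      LinearMap.comp_apply]
    rw [antipode_one_s9, Φ.normal, AA.mul_one, LinearEquiv.apply_symm_apply]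

end Statements
end
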